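/- arXiv:math/9508220 — 10 statements merged into one kernel-verified Lean document; each statement's English description precedes it below -/
import Mathlib

section
/- For a regular cardinal κ, if A ≤_κ B and B ≤_κ C for partial orders A ≤ B ≤ C, then A ≤_κ C. -/
universe u v

open Cardinal

/-- `f` is a κ-Freese-Nation mapping on the partial order `P`. -/
def IsFNMap (κ : Cardinal.{u}) {P : Type u} [PartialOrder P] (f : P → Set P) : Prop :=
  (∀ a, #(f a) < κ) ∧
    ∀ a b : P, a ≤ b → ∃ c, c ∈ f a ∧ c ∈ f b ∧ a ≤ c ∧ c ≤ b

/-- The partial order `P` has the κ-Freese-Nation property. -/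
def HasFN (κ : Cardinal.{u}) (P : Type u) [PartialOrder P] : Prop :=
  ∃ f : P → Set P, IsFNMap κ f

/-- `A` is a κ-substructure of the ambient partial order `P`: for every `b : P`,
`{a ∈ A | a ≤ b}` has a cofinal subset of size `< κ` and `{a ∈ A | b ≤ a}` has a
coinitial subset of size `< κ`. -/
def SubKappa (κ : Cardinal.{u}) {P : Type u} [PartialOrder P] (A : Set P) : Prop :=
  ∀ b : P,
    (∃ U : Set P, U ⊆ A ∧ #U < κ ∧ (∀ u ∈ U, u ≤ b) ∧
      (∀ a ∈ A, a ≤ b → ∃ u ∈ U, a ≤ u)) ∧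
    (∃ V : Set P, V ⊆ A ∧ #V < κ ∧ (∀ v ∈ V, b ≤ v) ∧
      (∀ a ∈ A, b ≤ a → ∃ v ∈ V, v ≤ a))

/-- `A ≤_κ B` for two subsets of an ambient partial order:
`A ⊆ B` and `A` is a κ-substructure of the suborder `B`. -/
def RelSubKappa (κ : Cardinal.{u}) {P : Type u} [PartialOrder P] (A B : Set P) : Prop :=
  A ⊆ B ∧ SubKappa κ {x : B | (x : P) ∈ A}

/-!
A cofinal subset of `{a ∈ A | a ≤ b}` is assembled from cofinal subsets of
`{a ∈ A | a ≤ u}` for `u` ranging over a small cofinal subset of `{u ∈ B | u ≤ b}`; regularity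
of `κ` keeps this union of fewer than `κ` sets of size `< κ` small. The coinitial half is the
same statement in the order dual.
-/

def HasSmallCofinalBelow (κ : Cardinal.{u}) {P : Type u} [PartialOrder P] (A : Set P) (b : P) :
    Prop :=
  ∃ U ⊆ A, #U < κ ∧ (∀ u ∈ U, u ≤ b) ∧ ∀ a ∈ A, a ≤ b → ∃ u ∈ U, a ≤ u

section

variable {κ : Cardinal.{u}} {P : Type u} [PartialOrder P]

theorem HasSmallCofinalBelow.trans (hκ : κ.IsRegular) {A B : Set P} {b : P} (hAB : A ⊆ B)
    (hB : HasSmallCofinalBelow κ B b)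
    (hA : ∀ u : B, HasSmallCofinalBelow κ {x : B | (x : P) ∈ A} u) :
    HasSmallCofinalBelow κ A b := by
  obtain ⟨U, hUB, hUcard, hUle, hUcof⟩ := hB
  choose V hVA hVcard hVle hVcof using fun u : U => hA ⟨u, hUB u.2⟩
  refine ⟨⋃ u : U, Subtype.val '' V u, ?_, ?_, ?_, ?_⟩
  · simp only [Set.iUnion_subset_iff, Set.image_subset_iff]
    exact hVA
  · rw [card_iUnion_lt_iff_forall_of_isRegular hκ hUcard]
    exact fun u => mk_image_le.trans_lt (hVcard u)
  · simp only [Set.mem_iUnion, Set.mem_image]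
    rintro _ ⟨u, y, hy, rfl⟩
    exact le_trans (α := P) (hVle u y hy) (hUle u u.2)
  · intro a ha hab
    obtain ⟨u, huU, hau⟩ := hUcof a (hAB ha) hab
    obtain ⟨v, hv, hav⟩ := hVcof ⟨u, huU⟩ ⟨a, hAB ha⟩ ha hau
    exact ⟨v, Set.mem_iUnion.2 ⟨⟨u, huU⟩, Set.mem_image_of_mem _ hv⟩, hav⟩

theorem subKappa_iff {A : Set P} :
    SubKappa κ A ↔ ∀ b : P, HasSmallCofinalBelow κ A b ∧
      HasSmallCofinalBelow (P := Pᵒᵈ) κ (OrderDual.ofDual ⁻¹' A) (OrderDual.toDual b) :=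
  Iff.rfl

end

/-- For regular κ, if A ≤_κ B and B ≤_κ C then A ≤_κ C. -/
theorem statement3 (κ : Cardinal.{u}) (hκ : κ.IsRegular) {C : Type u} [PartialOrder C]
    (A B : Set C) (hAB : A ⊆ B)
    (h1 : SubKappa κ {x : B | (x : C) ∈ A}) (h2 : SubKappa κ B) :
    SubKappa κ A := by
  rw [subKappa_iff] at h1 h2 ⊢
  exact fun b => ⟨(h2 b).1.trans hκ hAB fun u => (h1 u).1,
    HasSmallCofinalBelow.trans (P := Cᵒᵈ) hκ hAB (h2 b).2 fun u => (h1 u).2⟩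
end

section
/- For a regular cardinal κ, if A ≤_κ B, B has the κ-FN, and f is a κ-FN mapping on A, then there exists a κ-FN mapping g on B extending f (i.e., g(a) = f(a) for all a ∈ A). -/
universe u v

open Cardinal

/-!
Outside `A`, the new map takes the union of a given κ-FN map `h` on `B` with the values of `f` at a
`κ`-small set `W b ⊆ A` that meets every interval between `b` and an element of `A`. An interval
`[a, b]` with `a ∈ A`, `b ∉ A` then contains some `w ∈ W b`, and the witness that `f` provides
for `[a, w]` lies in both `f a` and the new value at `b`. Regularity of κ keeps the new values small.
-/

section FNExtension

variable {κ : Cardinal.{u}} {B : Type u} {A : Set B}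

noncomputable def liftFN (f : A → Set A) (b : B) : Set B :=
  open Classical in
  if hb : b ∈ A then Subtype.val '' f ⟨b, hb⟩ else ∅

theorem liftFN_coe (f : A → Set A) (a : A) : liftFN f a = Subtype.val '' f a := by
  simp [liftFN]

noncomputable def extendFN (h : B → Set B) (f : A → Set A) (W : B → Set B) (b : B) : Set B :=
  open Classical in
  if b ∈ A then liftFN f b else h b ∪ ⋃ w ∈ W b, liftFN f w

theorem extendFN_of_mem (h : B → Set B) (f : A → Set A) (W : B → Set B) {b : B} (hb : b ∈ A) :
    extendFN h f W b = liftFN f b := by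
  simp [extendFN, hb]

theorem extendFN_of_notMem (h : B → Set B) (f : A → Set A) (W : B → Set B) {b : B}
    (hb : b ∉ A) : extendFN h f W b = h b ∪ ⋃ w ∈ W b, liftFN f w := by
  simp [extendFN, hb]

theorem extendFN_coe (h : B → Set B) (f : A → Set A) (W : B → Set B) (a : A) :
    extendFN h f W a = Subtype.val '' f a := by
  rw [extendFN_of_mem h f W a.2, liftFN_coe]

variable [PartialOrder B]

theorem SubKappa.exists_small_sandwich (hκ : ℵ₀ ≤ κ) (hA : SubKappa κ A) (b : B) :
    ∃ W ⊆ A, #W < κ ∧ (∀ a ∈ A, a ≤ b → ∃ w ∈ W, a ≤ w ∧ w ≤ b) ∧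
      (∀ a ∈ A, b ≤ a → ∃ w ∈ W, b ≤ w ∧ w ≤ a) := by
  obtain ⟨⟨U, hUA, hUκ, hUle, hUcof⟩, ⟨V, hVA, hVκ, hVge, hVcoi⟩⟩ := hA b
  refine ⟨U ∪ V, Set.union_subset hUA hVA,
    (mk_union_le U V).trans_lt (add_lt_of_lt hκ hUκ hVκ), ?_, ?_⟩
  · intro a ha hab
    obtain ⟨u, hu, hau⟩ := hUcof a ha hab
    exact ⟨u, Or.inl hu, hau, hUle u hu⟩
  · intro a ha hba
    obtain ⟨v, hv, hva⟩ := hVcoi a ha hba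
    exact ⟨v, Or.inr hv, hVge v hv, hva⟩

theorem IsFNMap.card_liftFN_lt {f : A → Set A} (hf : IsFNMap κ f) {a : B} (ha : a ∈ A) :
    #(liftFN f a) < κ := by
  rw [← Subtype.coe_mk a ha, liftFN_coe]
  exact mk_image_le.trans_lt (hf.1 _)

theorem IsFNMap.exists_mem_liftFN {f : A → Set A} (hf : IsFNMap κ f) {a b : B} (ha : a ∈ A)
    (hb : b ∈ A) (hab : a ≤ b) : ∃ c ∈ liftFN f a, c ∈ liftFN f b ∧ a ≤ c ∧ c ≤ b := by
  obtain ⟨c, hca, hcb, hac, hcb'⟩ := hf.2 ⟨a, ha⟩ ⟨b, hb⟩ hab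
  rw [← Subtype.coe_mk a ha, ← Subtype.coe_mk b hb, liftFN_coe, liftFN_coe]
  exact ⟨c, ⟨c, hca, rfl⟩, ⟨c, hcb, rfl⟩, hac, hcb'⟩

variable {h : B → Set B} {f : A → Set A} {W : B → Set B}

theorem card_extendFN_lt (hκ : κ.IsRegular) (hh : IsFNMap κ h) (hf : IsFNMap κ f)
    (hWA : ∀ b, W b ⊆ A) (hWκ : ∀ b, #(W b) < κ) (b : B) : #(extendFN h f W b) < κ := by
  by_cases hb : b ∈ A
  · rw [extendFN_of_mem h f W hb]
    exact hf.card_liftFN_lt hb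
  · rw [extendFN_of_notMem h f W hb]
    refine (mk_union_le _ _).trans_lt (add_lt_of_lt hκ.aleph0_le (hh.1 b) ?_)
    exact (card_biUnion_lt_iff_forall_of_isRegular hκ (hWκ b)).2
      fun w hw => hf.card_liftFN_lt (hWA b hw)

theorem exists_mem_extendFN (hh : IsFNMap κ h) (hf : IsFNMap κ f) (hWA : ∀ b, W b ⊆ A)
    (hWlow : ∀ b, ∀ a ∈ A, a ≤ b → ∃ w ∈ W b, a ≤ w ∧ w ≤ b)
    (hWup : ∀ b, ∀ a ∈ A, b ≤ a → ∃ w ∈ W b, b ≤ w ∧ w ≤ a) {a b : B} (hab : a ≤ b) :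
    ∃ c, c ∈ extendFN h f W a ∧ c ∈ extendFN h f W b ∧ a ≤ c ∧ c ≤ b := by
  have mem_of_notMem {x y c : B} (hx : x ∉ A) (hy : y ∈ W x) (hc : c ∈ liftFN f y) :
      c ∈ extendFN h f W x := by
    rw [extendFN_of_notMem h f W hx]
    exact Or.inr (Set.mem_biUnion hy hc)
  by_cases ha : a ∈ A <;> by_cases hb : b ∈ A
  · simp only [extendFN_of_mem h f W ha, extendFN_of_mem h f W hb]
    exact hf.exists_mem_liftFN ha hb hab
  · obtain ⟨w, hw, haw, hwb⟩ := hWlow b a ha hab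
    obtain ⟨c, hca, hcw, hac, hcw'⟩ := hf.exists_mem_liftFN ha (hWA b hw) haw
    exact ⟨c, extendFN_of_mem h f W ha ▸ hca, mem_of_notMem hb hw hcw, hac, hcw'.trans hwb⟩
  · obtain ⟨w, hw, haw, hwb⟩ := hWup a b hb hab
    obtain ⟨c, hcw, hcb, hwc, hcb'⟩ := hf.exists_mem_liftFN (hWA a hw) hb hwb
    exact ⟨c, mem_of_notMem ha hw hcw, extendFN_of_mem h f W hb ▸ hcb, haw.trans hwc, hcb'⟩
  · obtain ⟨c, hca, hcb, hac, hcb'⟩ := hh.2 a b hab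
    simp only [extendFN_of_notMem h f W ha, extendFN_of_notMem h f W hb]
    exact ⟨c, Or.inl hca, Or.inl hcb, hac, hcb'⟩

theorem IsFNMap.extendFN (hκ : κ.IsRegular) (hh : IsFNMap κ h) (hf : IsFNMap κ f)
    (hWA : ∀ b, W b ⊆ A) (hWκ : ∀ b, #(W b) < κ)
    (hWlow : ∀ b, ∀ a ∈ A, a ≤ b → ∃ w ∈ W b, a ≤ w ∧ w ≤ b)
    (hWup : ∀ b, ∀ a ∈ A, b ≤ a → ∃ w ∈ W b, b ≤ w ∧ w ≤ a) :
    IsFNMap κ (extendFN h f W) :=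
  ⟨card_extendFN_lt hκ hh hf hWA hWκ, fun _ _ => exists_mem_extendFN hh hf hWA hWlow hWup⟩

end FNExtension

/-- For regular κ, if A ≤_κ B, B has the κ-FN and f is a κ-FN mapping on A, then there
is a κ-FN mapping g on B extending f. -/
theorem statement5 (κ : Cardinal.{u}) (hκ : κ.IsRegular) {B : Type u} [PartialOrder B]
    (A : Set B) (hA : SubKappa κ A) (hB : HasFN κ B)
    (f : ↥A → Set ↥A) (hf : IsFNMap κ f) :
    ∃ g : B → Set B, IsFNMap κ g ∧ ∀ a : ↥A, g ↑a = Subtype.val '' f a := by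
  obtain ⟨h, hh⟩ := hB
  choose W hWA hWκ hWlow hWup using hA.exists_small_sandwich hκ.aleph0_le
  exact ⟨extendFN h f W, hh.extendFN hκ hf hWA hWκ hWlow hWup, extendFN_coe h f W⟩
end

section
/- If g is a κ-FN mapping on a partial order B and C is a suborder of B closed under g (g(c) ⊆ C for all c ∈ C), then C ≤_κ B. -/
universe u v

open Cardinal

/-! The witnesses for `b` are the parts of `g b ∩ C` below and above `b`: for `a ∈ C` comparable
with `b`, the interpolant given by the FN property lies in `g b` and in `g a ⊆ C`. -/

namespace IsFNMap

variable {κ : Cardinal.{u}} {P : Type u} [PartialOrder P] {f : P → Set P}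

theorem mk_inter_lt (hf : IsFNMap κ f) (b : P) (s : Set P) : #(f b ∩ s : Set P) < κ :=
  (mk_le_mk_of_subset Set.inter_subset_left).trans_lt (hf.1 b)

theorem exists_small_cofinal_below (hf : IsFNMap κ f) {A : Set P} (hA : ∀ a ∈ A, f a ⊆ A)
    (b : P) :
    ∃ U : Set P, U ⊆ A ∧ #U < κ ∧ (∀ u ∈ U, u ≤ b) ∧ ∀ a ∈ A, a ≤ b → ∃ u ∈ U, a ≤ u := by
  refine ⟨f b ∩ (A ∩ Set.Iic b), fun u hu => hu.2.1, hf.mk_inter_lt b _, fun u hu => hu.2.2, ?_⟩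
  intro a ha hab
  obtain ⟨c, hca, hcb, hac, hcb'⟩ := hf.2 a b hab
  exact ⟨c, ⟨hcb, hA a ha hca, hcb'⟩, hac⟩

theorem exists_small_coinitial_above (hf : IsFNMap κ f) {A : Set P} (hA : ∀ a ∈ A, f a ⊆ A)
    (b : P) :
    ∃ V : Set P, V ⊆ A ∧ #V < κ ∧ (∀ v ∈ V, b ≤ v) ∧ ∀ a ∈ A, b ≤ a → ∃ v ∈ V, v ≤ a := by
  refine ⟨f b ∩ (A ∩ Set.Ici b), fun v hv => hv.2.1, hf.mk_inter_lt b _, fun v hv => hv.2.2, ?_⟩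
  intro a ha hba
  obtain ⟨c, hcb, hca, hbc, hca'⟩ := hf.2 b a hba
  exact ⟨c, ⟨hcb, hA a ha hca, hbc⟩, hca'⟩

end IsFNMap

/-- If g is a κ-FN mapping on B and C ⊆ B is closed under g, then C ≤_κ B. -/
theorem statement6 (κ : Cardinal.{u}) {B : Type u} [PartialOrder B]
    (g : B → Set B) (hg : IsFNMap κ g) (C : Set B) (hC : ∀ c ∈ C, g c ⊆ C) :
    SubKappa κ C := fun b =>
  ⟨hg.exists_small_cofinal_below hC b, hg.exists_small_coinitial_above hC b⟩
end

section
/- Let κ be a regular cardinal, δ a limit ordinal, and (B_α)_{α≤δ} a continuously increasing chain of partial orders with B_α ≤_κ B_{α+1} for all α < δ. If every B_α (α < δ) has the κ-FN, then B_δ = ∪_{α<δ} B_α has the κ-FN. -/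
universe u v

open Cardinal

theorem auxFN (κ : Cardinal.{u}) (hκ : κ.IsRegular) {Q : Type u} [PartialOrder Q]
    (r : Q → Ordinal.{u})
    (base : Q → Set Q) (hbcard : ∀ b, #(base b) < κ)
    (hbFN : ∀ a b : Q, a ≤ b → r a = r b → ∃ c, c ∈ base a ∧ c ∈ base b ∧ a ≤ c ∧ c ≤ b)
    (S : Q → Set Q)
    (hSrank : ∀ b, ∀ c ∈ S b, r c < r b)
    (hScard : ∀ b, #(S b) < κ)
    (hSup : ∀ y b : Q, y ≤ b → r y < r b → ∃ u ∈ S b, y ≤ u ∧ u ≤ b)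
    (hSdown : ∀ y b : Q, b ≤ y → r y < r b → ∃ v ∈ S b, b ≤ v ∧ v ≤ y) :
    HasFN κ Q := by
  have wf : WellFounded (fun a b : Q => r a < r b) := InvImage.wf r Ordinal.lt_wf
  let f : Q → Set Q :=
    wf.fix fun b IH => base b ∪ ⋃ (c : Q) (h : c ∈ S b), IH c (hSrank b c h)
  have hfix : ∀ b, f b = base b ∪ ⋃ (c : Q) (h : c ∈ S b), f c := fun b => wf.fix_eq _ b
  have hcard : ∀ b, #(f b) < κ := by
    intro b
    induction b using wf.induction with
    | _ b IH =>
      rw [hfix b]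
      apply lt_of_le_of_lt (Cardinal.mk_union_le _ _)
      apply Cardinal.add_lt_of_lt hκ.aleph0_le (hbcard b)
      refine lt_of_le_of_lt (Cardinal.mk_biUnion_le (fun c => f c) (S b)) ?_
      apply Cardinal.mul_lt_of_lt hκ.aleph0_le (hScard b)
      exact Cardinal.iSup_lt_of_isRegular hκ (hScard b) fun c => IH c (hSrank b c c.2)
  have key : ∀ γ : Ordinal.{u}, ∀ a b : Q, r a ≤ γ → r b ≤ γ → a ≤ b →
      ∃ c, c ∈ f a ∧ c ∈ f b ∧ a ≤ c ∧ c ≤ b := by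
    intro γ
    induction γ using Ordinal.induction with
    | _ γ IH =>
      intro a b ha hb hab
      rcases lt_trichotomy (r a) (r b) with h | h | h
      · obtain ⟨u, huS, hyu, hub⟩ := hSup a b hab h
        have hru : r u < r b := hSrank b u huS
        obtain ⟨c, hca, hcu, h1, h2⟩ :=
          IH (max (r a) (r u)) (lt_of_lt_of_le (max_lt h hru) hb) a u
            (le_max_left _ _) (le_max_right _ _) hyu
        refine ⟨c, hca, ?_, h1, h2.trans hub⟩
        rw [hfix b]
        exact Set.mem_union_right _ (Set.mem_iUnion.2 ⟨u, Set.mem_iUnion.2 ⟨huS, hcu⟩⟩)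
      · obtain ⟨c, h1, h2, h3, h4⟩ := hbFN a b hab h
        exact ⟨c, by rw [hfix a]; exact Set.mem_union_left _ h1,
          by rw [hfix b]; exact Set.mem_union_left _ h2, h3, h4⟩
      · obtain ⟨v, hvS, hav, hvb⟩ := hSdown b a hab h
        have hrv : r v < r a := hSrank a v hvS
        obtain ⟨c, hcv, hcb, h1, h2⟩ :=
          IH (max (r v) (r b)) (lt_of_lt_of_le (max_lt hrv h) ha) v b
            (le_max_left _ _) (le_max_right _ _) hvb
        refine ⟨c, ?_, hcb, hav.trans h1, h2⟩
        rw [hfix a]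
        exact Set.mem_union_right _ (Set.mem_iUnion.2 ⟨v, Set.mem_iUnion.2 ⟨hvS, hcv⟩⟩)
  exact ⟨f, hcard, fun a b hab =>
    key (max (r a) (r b)) a b (le_max_left _ _) (le_max_right _ _) hab⟩


/-- For regular κ and a continuously increasing chain (B_α)_{α ≤ δ} with
B_α ≤_κ B_{α+1} for all α < δ, if every B_α (α < δ) has the κ-FN then so does B_δ. -/
theorem statement8 (κ : Cardinal.{u}) (hκ : κ.IsRegular) {P : Type u} [PartialOrder P]
    (δ : Ordinal.{u}) (hδ : Order.IsSuccLimit δ) (B : Ordinal.{u} → Set P)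
    (hmono : ∀ α β : Ordinal.{u}, α ≤ β → β ≤ δ → B α ⊆ B β)
    (hcont : ∀ γ ≤ δ, Order.IsSuccLimit γ → B γ = ⋃ α < γ, B α)
    (hstep : ∀ α < δ, RelSubKappa κ (B α) (B (α + 1)))
    (hFN : ∀ α < δ, HasFN κ ↥(B α)) :
    HasFN κ ↥(B δ) := by
  classical
  choose F hF using hFN
  set r : ↥(B δ) → Ordinal.{u} := fun x => sInf {α | (x : P) ∈ B α} with hr
  have hne : ∀ x : ↥(B δ), {α | (x : P) ∈ B α}.Nonempty := fun x => ⟨δ, x.2⟩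
  have hrmem : ∀ x : ↥(B δ), (x : P) ∈ B (r x) := fun x => csInf_mem (hne x)
  have hrle : ∀ (x : ↥(B δ)) (α : Ordinal.{u}), (x : P) ∈ B α → r x ≤ α :=
    fun x α h => csInf_le' h
  have hrlt : ∀ x : ↥(B δ), r x < δ := by
    intro x
    have h2 : (x : P) ∈ ⋃ α < δ, B α := by
      rw [← hcont δ le_rfl hδ]; exact x.2
    obtain ⟨α, hα, hm⟩ := Set.mem_iUnion₂.1 h2
    exact lt_of_le_of_lt (hrle x α hm) hα
  have hnotlim : ∀ x : ↥(B δ), ¬ Order.IsSuccLimit (r x) := by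
    intro x hlim
    have h2 : (x : P) ∈ ⋃ α < r x, B α := by
      rw [← hcont (r x) (hrlt x).le hlim]; exact hrmem x
    obtain ⟨α, hα, hm⟩ := Set.mem_iUnion₂.1 h2
    exact absurd (hrle x α hm) (not_le.2 hα)
  -- base
  set base' : Ordinal.{u} → ↥(B δ) → Set ↥(B δ) := fun α b =>
    {x | ∃ (hα : α < δ) (hx : (x : P) ∈ B α) (hb : (b : P) ∈ B α),
      (⟨(x : P), hx⟩ : ↥(B α)) ∈ F α hα ⟨(b : P), hb⟩} with hbase'
  have hbcard : ∀ b : ↥(B δ), #(base' (r b) b) < κ := by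
    intro b
    have hinj : ∀ x : ↥(base' (r b) b), ∃ hx : ((x : ↥(B δ)) : P) ∈ B (r b),
        (⟨((x : ↥(B δ)) : P), hx⟩ : ↥(B (r b))) ∈ F (r b) (hrlt b) ⟨(b : P), hrmem b⟩ := by
      rintro ⟨x, hα, hx, hb, hmemF⟩
      exact ⟨hx, hmemF⟩
    choose g hg using hinj
    have : Function.Injective (fun x : ↥(base' (r b) b) =>
        (⟨⟨((x : ↥(B δ)) : P), g x⟩, hg x⟩ : ↥(F (r b) (hrlt b) ⟨(b : P), hrmem b⟩))) := by
      intro x y hxy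
      apply Subtype.ext
      apply Subtype.ext
      exact congrArg
        (fun z : ↥(F (r b) (hrlt b) ⟨(b : P), hrmem b⟩) => ((z : ↥(B (r b))) : P)) hxy
    exact lt_of_le_of_lt (Cardinal.mk_le_of_injective this) ((hF (r b) (hrlt b)).1 _)
  have hb'FN : ∀ (α : Ordinal.{u}) (hα : α < δ) (a b : ↥(B δ))
      (ha : (a : P) ∈ B α) (hb : (b : P) ∈ B α), a ≤ b →
      ∃ c, c ∈ base' α a ∧ c ∈ base' α b ∧ a ≤ c ∧ c ≤ b := by
    intro α hα a b ha hb hab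
    obtain ⟨c', hc1, hc2, hc3, hc4⟩ := (hF α hα).2 ⟨(a : P), ha⟩ ⟨(b : P), hb⟩ hab
    refine ⟨⟨(c' : P), hmono α δ hα.le le_rfl c'.2⟩, ⟨hα, c'.2, ha, hc1⟩,
      ⟨hα, c'.2, hb, hc2⟩, hc3, hc4⟩
  have hbFN : ∀ a b : ↥(B δ), a ≤ b → r a = r b →
      ∃ c, c ∈ base' (r a) a ∧ c ∈ base' (r b) b ∧ a ≤ c ∧ c ≤ b := by
    intro a b hab heq
    have hb' : (b : P) ∈ B (r a) := by rw [heq]; exact hrmem b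
    obtain ⟨c, h1, h2, h3, h4⟩ := hb'FN (r a) (hrlt a) a b (hrmem a) hb' hab
    refine ⟨c, h1, ?_, h3, h4⟩
    rw [← heq]
    exact h2
  -- step sets
  have hSex : ∀ b : ↥(B δ), ∃ S : Set ↥(B δ),
      (∀ c ∈ S, r c < r b) ∧ #S < κ ∧
      (∀ y : ↥(B δ), y ≤ b → r y < r b → ∃ u ∈ S, y ≤ u ∧ u ≤ b) ∧
      (∀ y : ↥(B δ), b ≤ y → r y < r b → ∃ v ∈ S, b ≤ v ∧ v ≤ y) := by
    intro b
    rcases Ordinal.zero_or_succ_or_isSuccLimit (r b) with h0 | ⟨β, hβ⟩ | hlim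
    · refine ⟨∅, ?_, ?_, ?_, ?_⟩
      · intro c hc; exact absurd hc (Set.notMem_empty c)
      · simpa using hκ.pos
      · intro y _ hy; rw [h0] at hy; exact absurd hy not_lt_zero
      · intro y _ hy; rw [h0] at hy; exact absurd hy not_lt_zero
    · replace hβ := hβ.symm
      rw [← Ordinal.add_one_eq_succ] at hβ
      have hsucc : β < β + 1 := by
        rw [Ordinal.add_one_eq_succ]; exact Order.lt_succ β
      have hβδ : β < δ := hsucc.trans (hβ ▸ hrlt b)
      obtain ⟨hsub, hsk⟩ := hstep β hβδ
      have hbmem : (b : P) ∈ B (β + 1) := hβ ▸ hrmem b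
      have hβ1δ : β + 1 ≤ δ := (hβ ▸ hrlt b).le
      obtain ⟨⟨U, hU1, hU2, hU3, hU4⟩, ⟨V, hV1, hV2, hV3, hV4⟩⟩ :=
        hsk ⟨(b : P), hbmem⟩
      let lift : ↥(B (β + 1)) → ↥(B δ) := fun x =>
        ⟨(x : P), hmono (β + 1) δ hβ1δ le_rfl x.2⟩
      have hranky : ∀ y : ↥(B δ), r y < r b → (y : P) ∈ B β := by
        intro y hy
        have hyle : r y ≤ β := by
          rw [hβ, Ordinal.add_one_eq_succ, Order.lt_succ_iff] at hy
          exact hy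
        exact hmono (r y) β hyle hβδ.le (hrmem y)
      refine ⟨lift '' (U ∪ V), ?_, ?_, ?_, ?_⟩
      · rintro c ⟨x, hx, rfl⟩
        have hxβ : (x : P) ∈ B β := by
          rcases hx with hx | hx
          · exact hU1 hx
          · exact hV1 hx
        calc r (lift x) ≤ β := hrle _ β hxβ
          _ < r b := hβ ▸ hsucc
      · refine lt_of_le_of_lt Cardinal.mk_image_le ?_
        exact lt_of_le_of_lt (Cardinal.mk_union_le _ _)
          (Cardinal.add_lt_of_lt hκ.aleph0_le hU2 hV2)
      · intro y hyb hy
        have hyβ : (y : P) ∈ B β := hranky y hy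
        have hymem : (y : P) ∈ B (β + 1) := hmono β (β + 1) hsucc.le hβ1δ hyβ
        obtain ⟨u, huU, hyu⟩ := hU4 ⟨(y : P), hymem⟩ hyβ
          (Subtype.mk_le_mk.2 (Subtype.coe_le_coe.2 hyb))
        refine ⟨lift u, ⟨u, Or.inl huU, rfl⟩, ?_, ?_⟩
        · exact Subtype.mk_le_mk.2 (Subtype.coe_le_coe.1 hyu)
        · have := hU3 u huU
          exact Subtype.mk_le_mk.2 (Subtype.coe_le_coe.1 this)
      · intro y hby hy
        have hyβ : (y : P) ∈ B β := hranky y hy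
        have hymem : (y : P) ∈ B (β + 1) := hmono β (β + 1) hsucc.le hβ1δ hyβ
        obtain ⟨v, hvV, hvy⟩ := hV4 ⟨(y : P), hymem⟩ hyβ
          (Subtype.mk_le_mk.2 (Subtype.coe_le_coe.2 hby))
        refine ⟨lift v, ⟨v, Or.inr hvV, rfl⟩, ?_, ?_⟩
        · have := hV3 v hvV
          exact Subtype.mk_le_mk.2 (Subtype.coe_le_coe.1 this)
        · exact Subtype.mk_le_mk.2 (Subtype.coe_le_coe.1 hvy)
    · exact absurd hlim (hnotlim b)
  choose S hS1 hS2 hS3 hS4 using hSex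
  exact auxFN κ hκ r (fun b => base' (r b) b) hbcard hbFN S hS1 hS2 (fun y b => hS3 b y) (fun y b => hS4 b y)
end

section
/- Suppose μ < κ, cf(μ) < cf(κ), and (B_α)_{α<μ} is an increasing sequence of κ-substructures of a partial order B. Then ∪_{α<μ} B_α is a κ-substructure of B. -/
universe u v

open Cardinal

/-- If μ < κ, cf(μ) < cf(κ) and (B_α)_{α<μ} is an increasing sequence of
κ-substructures of B, then their union is a κ-substructure of B. -/
theorem statement9 (κ μ : Cardinal.{u}) {P : Type u} [PartialOrder P]
    (hμκ : μ < κ) (hcf : μ.ord.cof < κ.ord.cof)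
    (B : Ordinal.{u} → Set P)
    (hmono : ∀ α β : Ordinal.{u}, α ≤ β → β < μ.ord → B α ⊆ B β)
    (h : ∀ α < μ.ord, SubKappa κ (B α)) :
    SubKappa κ (⋃ α < μ.ord, B α) := by
  intro b
  rcases eq_or_ne μ.ord 0 with hμ0 | hμ0
  · have hempty : (⋃ α < μ.ord, B α) = ∅ := by
      simp [hμ0]
    have h0κ : (0 : Cardinal) < κ := (zero_le (a := μ)).trans_lt hμκ
    constructor
    · exact ⟨∅, by simp, by simpa using h0κ, by simp, by simp [hempty]⟩
    · exact ⟨∅, by simp, by simpa using h0κ, by simp, by simp [hempty]⟩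
  -- κ is infinite
  have hcof1 : 1 ≤ μ.ord.cof := by
    rwa [Cardinal.one_le_iff_ne_zero, ne_eq, Ordinal.cof_eq_zero]
  have hlim : Order.IsSuccLimit κ.ord := by
    rcases Ordinal.zero_or_succ_or_isSuccLimit κ.ord with h0 | ⟨a, ha⟩ | hl
    · rw [h0, Ordinal.cof_zero] at hcf
      exact absurd hcf (by simp)
    · rw [← ha, Ordinal.cof_succ] at hcf
      exact absurd (hcof1.trans_lt hcf) (by norm_num)
    · exact hl
  have hκinf : ℵ₀ ≤ κ := by
    have := Ordinal.aleph0_le_cof.2 hlim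
    calc ℵ₀ ≤ κ.ord.cof := this
      _ ≤ κ.ord.card := Ordinal.cof_le_card _
      _ = κ := Cardinal.card_ord κ
  have hcofκ : κ.ord.cof ≤ κ := (Ordinal.cof_le_card _).trans_eq (Cardinal.card_ord κ)
  obtain ⟨ι, f, hlsub, hmkι⟩ := Ordinal.exists_lsub_cof μ.ord
  have hf : ∀ i, f i < μ.ord := fun i => hlsub ▸ Ordinal.lt_lsub f i
  have hικcof : #ι < κ.ord.cof := by rw [hmkι]; exact hcf
  have hικ : #ι < κ := hικcof.trans_le hcofκ
  have hcover : ∀ a ∈ (⋃ α < μ.ord, B α), ∃ i, a ∈ B (f i) := by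
    intro a ha
    rcases Set.mem_iUnion₂.1 ha with ⟨α, hα, haα⟩
    have : α < Ordinal.lsub f := hlsub ▸ hα
    rcases Ordinal.lt_lsub_iff.1 this with ⟨i, hi⟩
    exact ⟨i, hmono α (f i) hi (hf i) haα⟩
  constructor
  · have hchoice := fun i => (h (f i) (hf i) b).1
    choose U hUsub hUcard hUle hUcof using hchoice
    refine ⟨⋃ i, U i, ?_, ?_, ?_, ?_⟩
    · intro u hu
      rcases Set.mem_iUnion.1 hu with ⟨i, hi⟩
      exact Set.mem_biUnion (hf i) (hUsub i hi)
    · refine (Cardinal.mk_iUnion_le U).trans_lt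
        (Cardinal.mul_lt_of_lt hκinf hικ (Ordinal.iSup_lt hικcof hUcard))
    · intro u hu
      rcases Set.mem_iUnion.1 hu with ⟨i, hi⟩
      exact hUle i u hi
    · intro a ha hab
      rcases hcover a ha with ⟨i, hi⟩
      rcases hUcof i a hi hab with ⟨u, hu, hau⟩
      exact ⟨u, Set.mem_iUnion.2 ⟨i, hu⟩, hau⟩
  · have hchoice := fun i => (h (f i) (hf i) b).2
    choose V hVsub hVcard hVle hVcoi using hchoice
    refine ⟨⋃ i, V i, ?_, ?_, ?_, ?_⟩
    · intro v hv
      rcases Set.mem_iUnion.1 hv with ⟨i, hi⟩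
      exact Set.mem_biUnion (hf i) (hVsub i hi)
    · refine (Cardinal.mk_iUnion_le V).trans_lt
        (Cardinal.mul_lt_of_lt hκinf hικ (Ordinal.iSup_lt hικcof hVcard))
    · intro v hv
      rcases Set.mem_iUnion.1 hv with ⟨i, hi⟩
      exact hVle i v hi
    · intro a ha hab
      rcases hcover a ha with ⟨i, hi⟩
      rcases hVcoi i a hi hab with ⟨v, hv, hva⟩
      exact ⟨v, Set.mem_iUnion.2 ⟨i, hv⟩, hva⟩
end

section
/- For any infinite cardinal κ, the linear order κ⁺ + 1 (the ordinal κ⁺ + 1 with its usual ordering) does not have the κ-Freese-Nation property. -/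
universe u v

open Cardinal

/-- Auxiliary increasing sequence of ordinals: `FNseq σ i` is the supremum of
`σ (FNseq σ j) + 1` over `j < i`. -/
noncomputable def FNseq (σ : Ordinal.{u} → Ordinal.{u}) (i : Ordinal.{u}) : Ordinal.{u} :=
  Ordinal.bsup i fun j _h => σ (FNseq σ j) + 1
termination_by i
decreasing_by exact _h

theorem FNseq_def (σ : Ordinal.{u} → Ordinal.{u}) (i : Ordinal.{u}) :
    FNseq σ i = Ordinal.bsup i fun j _h => σ (FNseq σ j) + 1 := by
  rw [FNseq]

theorem FNseq_le {σ : Ordinal.{u} → Ordinal.{u}} {j i : Ordinal.{u}} (h : j < i) :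
    σ (FNseq σ j) + 1 ≤ FNseq σ i := by
  rw [FNseq_def σ i]; exact Ordinal.le_bsup _ j h

/-- For any infinite cardinal κ, the linear order κ⁺ + 1 does not have the κ-FN. -/
theorem statement11 (κ : Cardinal.{u}) (hκ : ℵ₀ ≤ κ) :
    ¬ HasFN κ (((Order.succ κ).ord + 1).ToType) := by
  intro hFN
  set Λ : Ordinal.{u} := (Order.succ κ).ord with hΛdef
  obtain ⟨f, hsize, hfn⟩ := hFN
  have hreg : (Order.succ κ).IsRegular := Cardinal.isRegular_succ hκ
  have hΛlim : Order.IsSuccLimit Λ := Cardinal.isSuccLimit_ord (hκ.trans (Order.le_succ κ))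
  have hΛsucc : Λ < Λ + 1 := by
    rw [Ordinal.add_one_eq_succ]; exact Order.lt_succ Λ
  set iso := Ordinal.ToType.mk (o := Λ + 1) with hiso
  set o : (Λ + 1).ToType → Ordinal.{u} :=
    fun x => ((iso.symm x : Set.Iio (Λ + 1)) : Ordinal) with ho
  have o_lt : ∀ x, o x < Λ + 1 := fun x => (iso.symm x).2
  have o_le : ∀ x, o x ≤ Λ := fun x => by
    have h := o_lt x
    rwa [Ordinal.add_one_eq_succ, Order.lt_succ_iff] at h
  have o_mono : ∀ {x y : (Λ + 1).ToType}, x ≤ y → o x ≤ o y := fun {x y} h =>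
    Subtype.coe_le_coe.mpr (iso.symm.monotone h)
  set pt : Ordinal.{u} → (Λ + 1).ToType :=
    fun α => iso ⟨α ⊓ Λ, lt_of_le_of_lt inf_le_right hΛsucc⟩ with hpt
  have o_pt : ∀ {α}, α ≤ Λ → o (pt α) = α := fun {α} h => by
    simp only [ho, hpt, OrderIso.symm_apply_apply]
    exact inf_eq_left.mpr h
  have pt_mono : ∀ {α β}, α ≤ β → pt α ≤ pt β := fun {α β} h =>
    iso.monotone (Subtype.mk_le_mk.mpr (inf_le_inf_right Λ h))
  have pt_self_mem : ∀ α, pt α ∈ f (pt α) := fun α => by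
    obtain ⟨c, hc1, _, hc3, hc4⟩ := hfn (pt α) (pt α) le_rfl
    rwa [le_antisymm hc4 hc3] at hc1
  set s : Ordinal.{u} → Ordinal.{u} := fun α =>
    ⨆ c : ↥(f (pt α)), if o ↑c < Λ then o ↑c + 1 else 0 with hs
  have s_lt : ∀ α, s α < Λ := fun α => by
    apply Cardinal.iSup_lt_ord_of_isRegular hreg ((hsize _).trans (Order.lt_succ κ))
    intro c
    by_cases hc : o ↑c < Λ
    · rw [if_pos hc, Ordinal.add_one_eq_succ]
      exact hΛlim.succ_lt hc
    · rw [if_neg hc]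
      exact hΛlim.pos
  have s_mem : ∀ {α} {c : (Λ + 1).ToType}, c ∈ f (pt α) → o c < Λ → o c < s α := by
    intro α c hmem hc
    have h := Ordinal.le_iSup
      (fun c : ↥(f (pt α)) => if o ↑c < Λ then o ↑c + 1 else 0) ⟨c, hmem⟩
    rw [if_pos hc] at h
    calc o c < o c + 1 := by
            rw [Ordinal.add_one_eq_succ]; exact Order.lt_succ _
      _ ≤ s α := h
  have s_self : ∀ {α}, α < Λ → α < s α := fun {α} h => by
    have := s_mem (pt_self_mem α) (by rwa [o_pt h.le])
    rwa [o_pt h.le] at this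
  set σ : Ordinal.{u} → Ordinal.{u} :=
    fun γ => Ordinal.bsup.{u, u} (γ + 1) fun α _ => s α with hσ
  have le_σ : ∀ {α γ}, α ≤ γ → s α ≤ σ γ := fun {α γ} h =>
    Ordinal.le_bsup _ α (by rw [Ordinal.add_one_eq_succ, Order.lt_succ_iff]; exact h)
  have σ_lt : ∀ {γ}, γ < Λ → σ γ < Λ := fun {γ} h => by
    apply Cardinal.bsup_lt_ord_of_isRegular hreg
    · have hγ1 : γ + 1 < Λ := by
        rw [Ordinal.add_one_eq_succ]; exact hΛlim.succ_lt h
      exact Cardinal.lt_ord.mp hγ1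
    · intro α _; exact s_lt α
  have σ_self : ∀ {γ}, γ < Λ → γ < σ γ := fun {γ} h =>
    (s_self h).trans_le (le_σ le_rfl)
  -- the increasing sequence
  have e_lt : ∀ i, i ≤ κ.ord → FNseq σ i < Λ := by
    intro i
    induction i using Ordinal.induction with
    | h i IH =>
      intro hi
      rw [FNseq_def]
      apply Cardinal.bsup_lt_ord_of_isRegular hreg
      · exact ((Ordinal.card_le_card hi).trans_eq (Cardinal.card_ord κ)).trans_lt
          (Order.lt_succ κ)
      · intro j hj
        have hj' : FNseq σ j < Λ := IH j hj (hj.le.trans hi)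
        rw [Ordinal.add_one_eq_succ]
        exact hΛlim.succ_lt (σ_lt hj')
  have e_mono : ∀ {j i}, j < i → i ≤ κ.ord → FNseq σ j < FNseq σ i := by
    intro j i h hi
    calc FNseq σ j < σ (FNseq σ j) := σ_self (e_lt j (h.le.trans hi))
      _ < σ (FNseq σ j) + 1 := by
            rw [Ordinal.add_one_eq_succ]; exact Order.lt_succ _
      _ ≤ FNseq σ i := FNseq_le h
  set b : Ordinal.{u} := FNseq σ κ.ord with hb
  have hbΛ : b < Λ := e_lt _ le_rfl
  set B := pt b with hB
  -- indexing type of cardinality κ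
  set iso2 := Ordinal.ToType.mk (o := κ.ord) with hiso2
  set ix : κ.ord.ToType → Ordinal.{u} :=
    fun x => ((iso2.symm x : Set.Iio κ.ord) : Ordinal) with hix
  have ix_lt : ∀ x, ix x < κ.ord := fun x => (iso2.symm x).2
  have hab : ∀ x, pt (FNseq σ (ix x)) ≤ B :=
    fun x => pt_mono (e_mono (ix_lt x) le_rfl).le
  choose c hc1 hc2 hc3 hc4 using fun x => hfn (pt (FNseq σ (ix x))) B (hab x)
  have hlow : ∀ x, FNseq σ (ix x) ≤ o (c x) := fun x => by
    have h := o_mono (hc3 x)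
    rwa [o_pt (e_lt _ (ix_lt x).le).le] at h
  have hcΛ : ∀ x, o (c x) < Λ := fun x => by
    have h := o_mono (hc4 x)
    rw [hB, o_pt hbΛ.le] at h
    exact h.trans_lt hbΛ
  have hkey : ∀ x, o (c x) < FNseq σ (ix x + 1) := fun x => by
    calc o (c x) < s (FNseq σ (ix x)) := s_mem (hc1 x) (hcΛ x)
      _ ≤ σ (FNseq σ (ix x)) := le_σ le_rfl
      _ < σ (FNseq σ (ix x)) + 1 := by
            rw [Ordinal.add_one_eq_succ]; exact Order.lt_succ _
      _ ≤ FNseq σ (ix x + 1) := FNseq_le (by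
            rw [Ordinal.add_one_eq_succ]; exact Order.lt_succ _)
  have hord : ∀ x y, ix x < ix y → o (c x) < o (c y) := by
    intro x y h
    have h1 : ix x + 1 ≤ ix y := by
      rw [Ordinal.add_one_eq_succ]; exact Order.succ_le_of_lt h
    have h2 : FNseq σ (ix x + 1) ≤ FNseq σ (ix y) := by
      rcases h1.eq_or_lt with he | hlt
      · rw [he]
      · exact (e_mono hlt (ix_lt y).le).le
    exact (hkey x).trans_le (h2.trans (hlow y))
  have Finj : Function.Injective (fun x : κ.ord.ToType => (⟨c x, hc2 x⟩ : ↥(f B))) := by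
    intro x y hxy
    have hcxy : c x = c y := congrArg Subtype.val hxy
    rcases lt_trichotomy (ix x) (ix y) with h | h | h
    · exact absurd (hcxy ▸ hord x y h) (lt_irrefl _)
    · have : iso2.symm x = iso2.symm y := Subtype.coe_injective h
      exact iso2.symm.injective this
    · exact absurd (hcxy ▸ hord y x h) (lt_irrefl _)
  have hκle : κ ≤ #(f B) := by
    have h := Cardinal.mk_le_of_injective Finj
    rwa [Cardinal.mk_toType, Cardinal.card_ord] at h
  exact absurd hκle (hsize B).not_ge
end

section
/- Let κ be a regular cardinal. If a Boolean algebra B has the κ-FN, then the cellularity c(B) ≤ 2^{<κ} and Length(B) ≤ 2^{<κ}. -/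
universe u v

open Cardinal

namespace FNAux

noncomputable instance (o : Ordinal.{u}) : IsWellOrder o.ToType (· < ·) := isWellOrder_lt

/-- Pigeonhole: a map on a set of size `> ν` with range of size `≤ ν` has a fiber of size `> ν`. -/
lemma fiber_lemma {α β : Type u} {ν : Cardinal.{u}} (hν : ℵ₀ ≤ ν) (S : Set α) (hS : ν < #S)
    (c : α → β) (hc : #(Set.range fun x : S => c x.1) ≤ ν) :
    ∃ v : β, ν < #{a : α | a ∈ S ∧ c a = v} := by
  by_contra h
  push_neg at h
  have key : #S ≤ ν := by
    set R := Set.range fun x : S => c x.1 with hR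
    set c' : S → R := fun x => ⟨c x.1, Set.mem_range_self x⟩ with hc'
    have e1 : #S = Cardinal.sum fun v : R => #{x : S // c' x = v} :=
      (Cardinal.mk_congr (Equiv.sigmaFiberEquiv c').symm).trans (Cardinal.mk_sigma _)
    have e2 : ∀ v : R, #{x : S // c' x = v} ≤ ν := by
      intro v
      refine le_trans (Cardinal.mk_le_of_injective (f := fun x : {x : S // c' x = v} =>
        (⟨x.1.1, x.1.2, congrArg Subtype.val x.2⟩ : {a : α | a ∈ S ∧ c a = v.1})) ?_) (h v.1)
      rintro ⟨⟨x, hx⟩, hx2⟩ ⟨⟨y, hy⟩, hy2⟩ hxy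
      simp only [Subtype.mk.injEq] at hxy ⊢
      exact hxy
    calc #S ≤ Cardinal.sum fun _ : R => ν := e1 ▸ Cardinal.sum_le_sum _ _ e2
      _ = #R * ν := Cardinal.sum_const' _ _
      _ ≤ ν * ν := mul_le_mul_left hc ν
      _ = ν := Cardinal.mul_eq_self hν
  exact absurd key (not_le.2 hS)

/-- For any `c < κ` there is a point of `κ.ord.ToType` whose initial segment has size `c`. -/
lemma exists_iio_mk (κ : Cardinal.{u}) {c : Cardinal.{u}} (hc : c < κ) :
    ∃ i : κ.ord.ToType, #(Set.Iio i) = c := by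
  letI : IsWellOrder κ.ord.ToType (· < ·) := isWellOrder_lt
  refine ⟨Ordinal.enum (α := κ.ord.ToType) (· < ·) ⟨c.ord, by rw [Ordinal.type_toType]; exact Cardinal.ord_lt_ord.2 hc⟩, ?_⟩
  have h1 : Ordinal.typein (α := κ.ord.ToType) (· < ·)
      (Ordinal.enum (α := κ.ord.ToType) (· < ·) ⟨c.ord, by rw [Ordinal.type_toType]; exact Cardinal.ord_lt_ord.2 hc⟩) = c.ord :=
    Ordinal.typein_enum _ _
  have h2 := Ordinal.card_typein (r := ((· < ·) : κ.ord.ToType → κ.ord.ToType → Prop))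
    (x := Ordinal.enum (α := κ.ord.ToType) (· < ·) ⟨c.ord, by rw [Ordinal.type_toType]; exact Cardinal.ord_lt_ord.2 hc⟩)
  rw [h1, Cardinal.card_ord] at h2
  exact h2.symm

/-- A subset of `κ.ord.ToType` of size `< κ` is bounded, for regular `κ`. -/
lemma bounded_of_lt {κ : Cardinal.{u}} (hκ : κ.IsRegular) (s : Set κ.ord.ToType)
    (hs : #s < κ) : ∃ i : κ.ord.ToType, ∀ x ∈ s, x < i := by
  letI : IsWellOrder κ.ord.ToType (· < ·) := isWellOrder_lt
  set o : Ordinal.{u} := ⨆ x : s, Order.succ (Ordinal.typein (α := κ.ord.ToType) (· < ·) x.1)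
    with ho
  have hlim := Cardinal.isSuccLimit_ord hκ.aleph0_le
  have hub : o < κ.ord := by
    refine Ordinal.iSup_lt_ord ?_ ?_
    · rwa [hκ.cof_eq]
    · intro x
      exact hlim.succ_lt (Ordinal.typein_lt_self x.1)
  refine ⟨Ordinal.enum (· < ·) ⟨o, by rwa [Ordinal.type_toType]⟩, ?_⟩
  intro x hx
  have h1 : Ordinal.typein (α := κ.ord.ToType) (· < ·) x < o := by
    refine lt_of_lt_of_le (Order.lt_succ _) ?_
    exact Ordinal.le_iSup (fun x : s => Order.succ (Ordinal.typein (α := κ.ord.ToType) (· < ·) x.1)) ⟨x, hx⟩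
  apply (Ordinal.typein_lt_typein ((· < ·) : κ.ord.ToType → κ.ord.ToType → Prop)).1
  convert h1 using 1
  exact Ordinal.typein_enum _ _


lemma le_powerlt_self {κ : Cardinal.{u}} (hκ : κ.IsRegular) : κ ≤ 2 ^< κ := by
  by_contra h
  push_neg at h
  exact absurd (Cardinal.le_powerlt 2 h) (not_le.2 (Cardinal.cantor _))

lemma powerlt_pow {κ : Cardinal.{u}} (hκ : κ.IsRegular) {μ : Cardinal.{u}} (hμ : μ < κ) :
    (2 ^< κ) ^ μ ≤ 2 ^< κ := by
  have hκ0 : ℵ₀ ≤ κ := hκ.aleph0_le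
  set I := κ.ord.ToType with hI
  set V := (Σ i : I, Set (↥(Set.Iio i))) with hV
  -- ν ≤ #V
  have hνV : 2 ^< κ ≤ #V := by
    rw [Cardinal.powerlt_le]
    intro x hx
    obtain ⟨i, hi⟩ := exists_iio_mk κ hx
    have h1 : (2 : Cardinal.{u}) ^ x = #(Set (↥(Set.Iio i))) := by
      rw [Cardinal.mk_set, hi]
    rw [h1]
    refine Cardinal.mk_le_of_injective (f := fun s => show V from ⟨i, s⟩) ?_
    intro s s' h
    have := (Sigma.mk.inj_iff.1 h).2
    exact eq_of_heq this
  set P := μ.ord.ToType with hP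
  have hPμ : #P = μ := by rw [hP, Cardinal.mk_toType, Cardinal.card_ord]
  -- (#V) ^ μ = #(P → V)
  have h2 : (#V) ^ μ = #(P → V) := by rw [← hPμ, Cardinal.power_def]
  -- bound #(P → V)
  have h3 : #(P → V) ≤ 2 ^< κ := by
    have cover : (Set.univ : Set (P → V)) ⊆
        ⋃ i₀ : I, {g : P → V | ∀ x : P, (g x).1 < i₀} := by
      intro g _
      have hr : #(Set.range fun x : P => (g x).1) < κ := by
        refine lt_of_le_of_lt Cardinal.mk_range_le ?_
        rw [hPμ]; exact hμ
      obtain ⟨i₀, hi₀⟩ := bounded_of_lt hκ _ hr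
      exact Set.mem_iUnion.2 ⟨i₀, fun x => hi₀ _ (Set.mem_range_self x)⟩
    have step : ∀ i₀ : I, #{g : P → V | ∀ x : P, (g x).1 < i₀} ≤ 2 ^< κ := by
      intro i₀
      set d := #(Set.Iio i₀) with hd
      have hdκ : d < κ := Cardinal.mk_Iio_ord_toType i₀
      -- inject into P → V' where V' is a subtype
      set V' := {v : V // v.1 < i₀} with hV'
      have inj1 : #{g : P → V | ∀ x : P, (g x).1 < i₀} ≤ #(P → V') := by
        refine Cardinal.mk_le_of_injective (f := fun g => fun x : P => (⟨g.1 x, g.2 x⟩ : V')) ?_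
        intro g g' hgg
        ext x : 2
        · exact congrArg Subtype.val (congrFun hgg x)
      -- #V' ≤ 2 ^ (d + d)
      have hV'le : #V' ≤ 2 ^ (d + d) := by
        have inj2 : #V' ≤ #(↥(Set.Iio i₀) × ↥(𝒫 (Set.Iio i₀))) := by
          refine Cardinal.mk_le_of_injective
            (f := fun v => (⟨v.1.1, v.2⟩, ⟨Subtype.val '' v.1.2,
              fun x hx => by
                obtain ⟨y, _, rfl⟩ := hx
                exact lt_trans y.2 v.2⟩)) ?_
          rintro ⟨⟨i, s⟩, hi⟩ ⟨⟨i', s'⟩, hi'⟩ hvv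
          simp only [Prod.mk.injEq, Subtype.mk.injEq] at hvv
          obtain ⟨h1, h2⟩ := hvv
          obtain rfl : i = i' := congrArg Subtype.val h1
          have hss : s = s' := Set.image_injective.mpr Subtype.val_injective h2
          exact Subtype.ext (congrArg (Sigma.mk i) hss)
        refine le_trans inj2 ?_
        rw [Cardinal.mk_prod, Cardinal.lift_id, Cardinal.lift_id, Cardinal.mk_powerset,
          Cardinal.power_add]
        exact mul_le_mul' (le_of_lt (Cardinal.cantor d)) le_rfl
      have h4 : #(P → V') ≤ (2 ^ (d + d)) ^ μ := by
        rw [← hPμ, ← Cardinal.power_def]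
        exact Cardinal.power_le_power_right hV'le
      have h5 : ((2 : Cardinal.{u}) ^ (d + d)) ^ μ = 2 ^ ((d + d) * μ) := by
        rw [Cardinal.power_mul]
      have h6 : (d + d) * μ < κ :=
        Cardinal.mul_lt_of_lt hκ0 (Cardinal.add_lt_of_lt hκ0 hdκ hdκ) hμ
      exact le_trans inj1 (le_trans h4 (h5 ▸ Cardinal.le_powerlt 2 h6))
    calc #(P → V) = #(Set.univ : Set (P → V)) := Cardinal.mk_univ.symm
      _ ≤ #(⋃ i₀ : I, {g : P → V | ∀ x : P, (g x).1 < i₀}) := Cardinal.mk_le_mk_of_subset cover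
      _ ≤ Cardinal.sum fun i₀ : I => #{g : P → V | ∀ x : P, (g x).1 < i₀} :=
          Cardinal.mk_iUnion_le_sum_mk
      _ ≤ Cardinal.sum fun _ : I => 2 ^< κ := Cardinal.sum_le_sum _ _ step
      _ = #I * (2 ^< κ) := Cardinal.sum_const' _ _
      _ ≤ (2 ^< κ) * (2 ^< κ) := by
          refine mul_le_mul' ?_ le_rfl
          rw [hI, Cardinal.mk_toType, Cardinal.card_ord]
          exact le_powerlt_self hκ
      _ = 2 ^< κ := Cardinal.mul_eq_self (le_trans hκ0 (le_powerlt_self hκ))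
  calc (2 ^< κ) ^ μ ≤ (#V) ^ μ := Cardinal.power_le_power_right hνV
    _ = #(P → V) := h2
    _ ≤ 2 ^< κ := h3


theorem core {B : Type u} [PartialOrder B] (κ : Cardinal.{u}) (hκ : κ.IsRegular)
    (Y : Set B) (hY : 2 ^< κ < #Y) (H : B → Set B)
    (hH1 : ∀ a, #(H a) < κ) (hH2 : ∀ a, a ∈ H a) :
    ∃ a ∈ Y, ∃ b ∈ Y, a ≠ b ∧ ∃ e : ↥(H a) ≃o ↥(H b),
      ((e ⟨a, hH2 a⟩ : ↥(H b)) : B) = b ∧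
      ∀ x (hxa : x ∈ H a) (hxb : x ∈ H b), ((e ⟨x, hxa⟩ : ↥(H b)) : B) = x := by
  classical
  letI : IsWellOrder κ.ord.ToType (· < ·) := isWellOrder_lt
  have hκ0 : ℵ₀ ≤ κ := hκ.aleph0_le
  have hκν : κ ≤ 2 ^< κ := le_powerlt_self hκ
  have hν0 : ℵ₀ ≤ 2 ^< κ := le_trans hκ0 hκν
  have hImk : #(κ.ord.ToType) = κ := by rw [Cardinal.mk_toType, Cardinal.card_ord]
  -- choose enumerations of the hulls by initial segments of κ.ord.ToType
  have hch : ∀ a : B, ∃ (i : κ.ord.ToType) (g : B → κ.ord.ToType),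
      Set.BijOn g (H a) (Set.Iio i) := by
    intro a
    obtain ⟨i, hi⟩ := exists_iio_mk κ (hH1 a)
    obtain ⟨E⟩ := Cardinal.eq.1 hi
    refine ⟨i, fun x => if h : x ∈ H a then (E.symm ⟨x, h⟩ : κ.ord.ToType) else i, ?_, ?_, ?_⟩
    · intro x hx
      simp only [dif_pos hx]
      exact (E.symm ⟨x, hx⟩).2
    · intro x hx y hy hxy
      simp only [dif_pos hx, dif_pos hy] at hxy
      have h2 : E.symm ⟨x, hx⟩ = E.symm ⟨y, hy⟩ := Subtype.ext hxy
      have h3 := E.symm.injective h2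
      exact congrArg Subtype.val h3
    · intro j hj
      refine ⟨(E ⟨j, hj⟩ : B), (E ⟨j, hj⟩).2, ?_⟩
      simp only [dif_pos (E ⟨j, hj⟩).2]
      have : E.symm ⟨(E ⟨j, hj⟩ : B), (E ⟨j, hj⟩).2⟩ = ⟨j, hj⟩ := by
        rw [Subtype.coe_eta]
        exact E.symm_apply_apply _
      rw [this]
  choose ia ga hbij using hch
  -- pigeonhole stage 1 : the length of the enumeration
  obtain ⟨istar, h1⟩ := fiber_lemma hν0 Y hY ia
    (le_trans (Cardinal.mk_set_le _) (le_trans hImk.le hκν))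
  -- pigeonhole stage 2 : index of the point itself
  obtain ⟨jstar, h2⟩ := fiber_lemma hν0 {a : B | a ∈ Y ∧ ia a = istar} h1 (fun a => ga a a)
    (le_trans (Cardinal.mk_set_le _) (le_trans hImk.le hκν))
  -- pigeonhole stage 3 : the order pattern
  set R : B → Set (κ.ord.ToType × κ.ord.ToType) := fun a =>
    {p | ∃ x, ∃ _ : x ∈ H a, ∃ y, ∃ _ : y ∈ H a, x ≤ y ∧ p = (ga a x, ga a y)} with hR
  have hr3 : #(Set.range fun x : ↥{a : B | (a ∈ Y ∧ ia a = istar) ∧ ga a a = jstar} => R x.1)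
      ≤ 2 ^< κ := by
    have hsub : (Set.range fun x : ↥{a : B | (a ∈ Y ∧ ia a = istar) ∧ ga a a = jstar} => R x.1)
        ⊆ 𝒫 (Set.Iio istar ×ˢ Set.Iio istar) := by
      rintro _ ⟨⟨a, ha⟩, rfl⟩
      rintro p ⟨x, hx, y, hy, _, rfl⟩
      have hia : ia a = istar := ha.1.2
      have h1 := (hbij a).mapsTo hx
      have h2 := (hbij a).mapsTo hy
      rw [hia] at h1 h2
      exact ⟨h1, h2⟩
    refine le_trans (Cardinal.mk_le_mk_of_subset hsub) ?_
    rw [Cardinal.mk_powerset]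
    refine Cardinal.le_powerlt 2 ?_
    have e : ↥(Set.Iio istar ×ˢ Set.Iio istar) ≃ (↥(Set.Iio istar) × ↥(Set.Iio istar)) :=
      Equiv.Set.prod _ _
    rw [Cardinal.mk_congr e, Cardinal.mk_prod]
    simp only [Cardinal.lift_id]
    exact Cardinal.mul_lt_of_lt hκ0 (Cardinal.mk_Iio_ord_toType istar)
      (Cardinal.mk_Iio_ord_toType istar)
  obtain ⟨Rstar, h3⟩ := fiber_lemma hν0 _ h2 R hr3
  set T : Set B := {a : B | (a ∈ {a : B | a ∈ Y ∧ ia a = istar} ∧ ga a a = jstar) ∧ R a = Rstar}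
    with hT
  have hTcard : 2 ^< κ < #T := h3
  have hTY : ∀ a ∈ T, a ∈ Y := fun a ha => ha.1.1.1
  have hTi : ∀ a ∈ T, ia a = istar := fun a ha => ha.1.1.2
  have hTj : ∀ a ∈ T, ga a a = jstar := fun a ha => ha.1.2
  have hTR : ∀ a ∈ T, R a = Rstar := fun a ha => ha.2
  have hTbij : ∀ a ∈ T, Set.BijOn (ga a) (H a) (Set.Iio istar) := by
    intro a ha
    have := hbij a
    rwa [hTi a ha] at this
  -- order pattern transfer
  have hpat : ∀ a ∈ T, ∀ (x y : B) (hx : x ∈ H a) (hy : y ∈ H a),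
      (x ≤ y ↔ (ga a x, ga a y) ∈ Rstar) := by
    intro a ha x y hx hy
    constructor
    · intro h
      rw [← hTR a ha]
      exact ⟨x, hx, y, hy, h, rfl⟩
    · intro h
      rw [← hTR a ha] at h
      obtain ⟨x', hx', y', hy', hle, hp⟩ := h
      have e1 : ga a x' = ga a x := (congrArg Prod.fst hp).symm
      have e2 : ga a y' = ga a y := (congrArg Prod.snd hp).symm
      rw [(hbij a).injOn hx' hx e1, (hbij a).injOn hy' hy e2] at hle
      exact hle
  -- the amalgamation construction
  have hD : #(↥(Set.Iio istar)) < κ := Cardinal.mk_Iio_ord_toType istar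
  have hYne : Nonempty ↥Y := Cardinal.mk_ne_zero_iff.1
    (by intro h0; rw [h0] at hY; exact absurd hY (by simp))
  obtain ⟨⟨a0, _⟩⟩ := hYne
  set compat : (↥(Set.Iio istar) → Option B) → B → Prop := fun τ a =>
    ∀ (i : ↥(Set.Iio istar)) (x : B), τ i = some x → x ∈ H a ∧ ga a x = i.1 with hcompat
  have hwex : ∀ τ : ↥(Set.Iio istar) → Option B, ∃ a : B,
      ((∃ b, b ∈ T ∧ compat τ b) → (a ∈ T ∧ compat τ a)) := by
    intro τ
    by_cases h : ∃ b, b ∈ T ∧ compat τ b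
    · exact ⟨h.choose, fun _ => h.choose_spec⟩
    · exact ⟨a0, fun hc => absurd hc h⟩
  choose w hw using hwex
  set step : Set B → Set B := fun S =>
    S ∪ ⋃ τ : {τ : ↥(Set.Iio istar) → Option B //
      ∀ (i : ↥(Set.Iio istar)) (x : B), τ i = some x → x ∈ S}, H (w τ.1) with hstepdef
  have hstepsub : ∀ S, S ⊆ step S := fun S => Set.subset_union_left
  set M : κ.ord.ToType → Set B := WellFounded.fix
    (IsWellFounded.wf (α := κ.ord.ToType) (r := (· < ·)))
    (fun i rec => step (⋃ j : {j : κ.ord.ToType // j < i}, rec j.1 j.2)) with hM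
  have hMeq : ∀ i, M i = step (⋃ j : {j : κ.ord.ToType // j < i}, M j.1) := by
    intro i
    exact WellFounded.fix_eq _ _ i
  -- size of the steps
  have hstepcard : ∀ S : Set B, #S ≤ 2 ^< κ → #(step S) ≤ 2 ^< κ := by
    intro S hS
    rw [hstepdef]
    refine le_trans (Cardinal.mk_union_le _ _) ?_
    have hτcard : #{τ : ↥(Set.Iio istar) → Option B //
        ∀ (i : ↥(Set.Iio istar)) (x : B), τ i = some x → x ∈ S} ≤ 2 ^< κ := by
      have hinj : #{τ : ↥(Set.Iio istar) → Option B //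
          ∀ (i : ↥(Set.Iio istar)) (x : B), τ i = some x → x ∈ S}
          ≤ #(↥(Set.Iio istar) → Option ↥S) := by
        refine Cardinal.mk_le_of_injective (f := fun τ => fun i =>
          (τ.1 i).pmap (fun x hx => (⟨x, hx⟩ : ↥S)) (fun x hx => τ.2 i x hx)) ?_
        intro τ σ h
        have hdec : ∀ (ρ : {τ : ↥(Set.Iio istar) → Option B //
            ∀ (i : ↥(Set.Iio istar)) (x : B), τ i = some x → x ∈ S}) (i : ↥(Set.Iio istar)),
            Option.map Subtype.val ((ρ.1 i).pmap (fun x hx => (⟨x, hx⟩ : ↥S))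
              (fun x hx => ρ.2 i x hx)) = ρ.1 i := by
          intro ρ i
          rw [Option.map_pmap]
          have h5 : Option.pmap (fun (x : B) (_ : x ∈ S) => x) (ρ.1 i)
              (fun x hx => ρ.2 i x hx) = Option.map (fun x => x) (ρ.1 i) :=
            Option.pmap_eq_map _ _ _ _
          simpa using h5
        apply Subtype.ext
        funext i
        rw [← hdec τ i, ← hdec σ i]
        exact congrArg (Option.map Subtype.val) (congrFun h i)
      refine le_trans hinj ?_
      have he : #(↥(Set.Iio istar) → Option ↥S) = (#S + 1) ^ #(↥(Set.Iio istar)) := by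
        rw [← Cardinal.mk_option, Cardinal.power_def]
      rw [he]
      refine le_trans (Cardinal.power_le_power_right ?_) (powerlt_pow hκ hD)
      calc #S + 1 ≤ (2 ^< κ) + (2 ^< κ) := add_le_add hS (le_trans (by norm_num) hν0)
        _ = 2 ^< κ := Cardinal.add_eq_self hν0
    have hU : #(⋃ τ : {τ : ↥(Set.Iio istar) → Option B //
        ∀ (i : ↥(Set.Iio istar)) (x : B), τ i = some x → x ∈ S}, H (w τ.1)) ≤ 2 ^< κ := by
      refine le_trans Cardinal.mk_iUnion_le_sum_mk ?_
      refine le_trans (Cardinal.sum_le_sum _ (fun _ => 2 ^< κ)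
        (fun τ => le_trans (hH1 _).le hκν)) ?_
      rw [Cardinal.sum_const']
      exact le_trans (mul_le_mul' hτcard le_rfl) (Cardinal.mul_eq_self hν0).le
    calc #S + _ ≤ (2 ^< κ) + (2 ^< κ) := add_le_add hS hU
      _ = 2 ^< κ := Cardinal.add_eq_self hν0
  -- size of the stages
  have hMcard : ∀ i, #(M i) ≤ 2 ^< κ := by
    intro i
    induction i using WellFounded.induction (hwf :=
      (IsWellFounded.wf (α := κ.ord.ToType) (r := (· < ·)))) with
    | _ i IH =>
      rw [hMeq i]
      refine hstepcard _ ?_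
      refine le_trans Cardinal.mk_iUnion_le_sum_mk ?_
      refine le_trans (Cardinal.sum_le_sum _ (fun _ => 2 ^< κ) (fun j => IH j.1 j.2)) ?_
      rw [Cardinal.sum_const']
      refine le_trans (mul_le_mul' ?_ le_rfl) (Cardinal.mul_eq_self hν0).le
      exact le_trans (Cardinal.mk_Iio_ord_toType i).le hκν
  set MM : Set B := ⋃ i : κ.ord.ToType, M i with hMM
  have hMMcard : #MM ≤ 2 ^< κ := by
    refine le_trans Cardinal.mk_iUnion_le_sum_mk ?_
    refine le_trans (Cardinal.sum_le_sum _ (fun _ => 2 ^< κ) (fun i => hMcard i)) ?_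
    rw [Cardinal.sum_const']
    refine le_trans (mul_le_mul' ?_ le_rfl) (Cardinal.mul_eq_self hν0).le
    exact le_trans hImk.le hκν
  have hMsubMM : ∀ i, M i ⊆ MM := fun i => Set.subset_iUnion M i
  -- closure property
  have hIne : Nonempty κ.ord.ToType := Cardinal.mk_ne_zero_iff.1
    (by rw [hImk]; exact hκ.pos.ne')
  obtain ⟨i00⟩ := hIne
  have hclos : ∀ τ : ↥(Set.Iio istar) → Option B,
      (∀ (i : ↥(Set.Iio istar)) (x : B), τ i = some x → x ∈ MM) → H (w τ) ⊆ MM := by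
    intro τ hτ
    have hlev : ∀ i : ↥(Set.Iio istar), ∃ l : κ.ord.ToType,
        ∀ x : B, τ i = some x → x ∈ M l := by
      intro i
      cases hc : τ i with
      | none => exact ⟨i00, fun x hx => by cases hx⟩
      | some x =>
        have := hτ i x hc
        rw [hMM] at this
        obtain ⟨l, hl⟩ := Set.mem_iUnion.1 this
        exact ⟨l, fun y hy => by
          cases hy
          exact hl⟩
    choose lv hlv using hlev
    obtain ⟨i₀, hi₀⟩ := bounded_of_lt hκ (Set.range lv)
      (lt_of_le_of_lt Cardinal.mk_range_le hD)
    have hvalid : ∀ (i : ↥(Set.Iio istar)) (x : B), τ i = some x →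
        x ∈ ⋃ j : {j : κ.ord.ToType // j < i₀}, M j.1 := by
      intro i x hx
      exact Set.mem_iUnion.2 ⟨⟨lv i, hi₀ _ (Set.mem_range_self i)⟩, hlv i x hx⟩
    have hsub2 : H (w τ) ⊆ step (⋃ j : {j : κ.ord.ToType // j < i₀}, M j.1) := by
      intro y hy
      rw [hstepdef]
      exact Set.mem_union_right _ (Set.mem_iUnion.2 ⟨⟨τ, hvalid⟩, hy⟩)
    refine subset_trans hsub2 ?_
    rw [← hMeq i₀]
    exact hMsubMM i₀
  -- pick b in T outside MM
  have hTnot : ¬ (T ⊆ MM) := by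
    intro hsub
    exact absurd (le_trans (Cardinal.mk_le_mk_of_subset hsub) hMMcard) (not_le.2 hTcard)
  obtain ⟨b, hbT, hbM⟩ := Set.not_subset.1 hTnot
  have hbbij : Set.BijOn (ga b) (H b) (Set.Iio istar) := hTbij b hbT
  -- the trace type of b over MM
  set τs : ↥(Set.Iio istar) → Option B := fun i =>
    if h : ∃ x, x ∈ H b ∧ ga b x = i.1 ∧ x ∈ MM then some h.choose else none with hτs
  have hτs_spec : ∀ (i : ↥(Set.Iio istar)) (x : B), τs i = some x →
      x ∈ H b ∧ ga b x = i.1 ∧ x ∈ MM := by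
    intro i x hx
    rw [hτs] at hx
    by_cases h : ∃ y, y ∈ H b ∧ ga b y = i.1 ∧ y ∈ MM
    · simp only [dif_pos h] at hx
      obtain rfl : h.choose = x := Option.some.inj hx
      exact h.choose_spec
    · simp only [dif_neg h] at hx
      cases hx
  have hcompat_b : compat τs b := by
    intro i x hx
    have h5 := hτs_spec i x hx
    exact ⟨h5.1, h5.2.1⟩
  obtain ⟨hwT, hwcompat⟩ := hw τs ⟨b, hbT, hcompat_b⟩
  have haMM : H (w τs) ⊆ MM := hclos τs (fun i x hx => (hτs_spec i x hx).2.2)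
  have hab : w τs ≠ b := by
    intro h
    exact hbM (h ▸ haMM (hH2 (w τs)))
  -- key : common elements have the same index
  have hkey : ∀ x, x ∈ H b → x ∈ MM → x ∈ H (w τs) ∧ ga (w τs) x = ga b x := by
    intro x hxb hxM
    have hi : ga b x ∈ Set.Iio istar := hbbij.mapsTo hxb
    have hex : ∃ y, y ∈ H b ∧ ga b y = (⟨ga b x, hi⟩ : ↥(Set.Iio istar)).1 ∧ y ∈ MM :=
      ⟨x, hxb, rfl, hxM⟩
    have hτx : τs ⟨ga b x, hi⟩ = some x := by
      rw [hτs]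
      simp only [dif_pos hex]
      congr 1
      exact hbbij.injOn hex.choose_spec.1 hxb hex.choose_spec.2.1
    exact hwcompat _ x hτx
  -- build the order isomorphism
  have habij : Set.BijOn (ga (w τs)) (H (w τs)) (Set.Iio istar) := hTbij _ hwT
  set Ea : ↥(H (w τs)) ≃ ↥(Set.Iio istar) := Set.BijOn.equiv (ga (w τs)) habij with hEa
  set Eb : ↥(H b) ≃ ↥(Set.Iio istar) := Set.BijOn.equiv (ga b) hbbij with hEb
  set e0 : ↥(H (w τs)) ≃ ↥(H b) := Ea.trans Eb.symm with he0
  have hga_e : ∀ x : ↥(H (w τs)), ga b (e0 x).1 = ga (w τs) x.1 := by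
    intro x
    exact congrArg Subtype.val (Eb.apply_symm_apply (Ea x))
  have hrel : ∀ x y : ↥(H (w τs)), (e0 x ≤ e0 y ↔ x ≤ y) := by
    intro x y
    constructor
    · intro h
      have h5 : ((e0 x) : B) ≤ ((e0 y) : B) := Subtype.coe_le_coe.2 h
      have h6 := (hpat b hbT _ _ (e0 x).2 (e0 y).2).1 h5
      rw [hga_e x, hga_e y] at h6
      exact Subtype.coe_le_coe.1 ((hpat _ hwT x.1 y.1 x.2 y.2).2 h6)
    · intro h
      have h5 : (x : B) ≤ (y : B) := Subtype.coe_le_coe.2 h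
      have h6 := (hpat _ hwT _ _ x.2 y.2).1 h5
      rw [← hga_e x, ← hga_e y] at h6
      exact Subtype.coe_le_coe.1 ((hpat b hbT _ _ (e0 x).2 (e0 y).2).2 h6)
  set e : ↥(H (w τs)) ≃o ↥(H b) := { toEquiv := e0, map_rel_iff' := fun {x y} => hrel x y }
    with he
  have hea : ((e ⟨w τs, hH2 (w τs)⟩ : ↥(H b)) : B) = b := by
    refine hbbij.injOn (e ⟨w τs, hH2 (w τs)⟩).2 (hH2 b) ?_
    have h5 := hga_e ⟨w τs, hH2 (w τs)⟩
    exact h5.trans ((hTj _ hwT).trans (hTj b hbT).symm)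
  have hfix : ∀ x (hxa : x ∈ H (w τs)) (hxb : x ∈ H b),
      ((e ⟨x, hxa⟩ : ↥(H b)) : B) = x := by
    intro x hxa hxb
    have hk := hkey x hxb (haMM hxa)
    refine hbbij.injOn (e ⟨x, hxa⟩).2 hxb ?_
    exact (hga_e ⟨x, hxa⟩).trans hk.2
  exact ⟨w τs, hTY _ hwT, b, hTY b hbT, hab, e, hea, hfix⟩


end FNAux

/-- For regular κ, if a Boolean algebra B has the κ-FN, then the cellularity of B and
the length of B are at most 2^{<κ}. -/
theorem statement15 (κ : Cardinal.{u}) (hκ : κ.IsRegular) {B : Type u}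
    [BooleanAlgebra B] (hFN : HasFN κ B) :
    (⨆ Y : {Y : Set B // (⊥ : B) ∉ Y ∧ Y.Pairwise Disjoint}, #↥(Y.1)) ≤ 2 ^< κ ∧
    (⨆ Y : {Y : Set B // IsChain (· ≤ ·) Y}, #↥(Y.1)) ≤ 2 ^< κ := by
  obtain ⟨f, hf1, hf2⟩ := hFN
  have hκ0 : ℵ₀ ≤ κ := hκ.aleph0_le
  constructor
  · refine ciSup_le' ?_
    rintro ⟨Y, hbot, hpair⟩
    by_contra hlt
    push_neg at hlt
    -- hulls
    set H : B → Set B := fun a => insert a (insert aᶜ (f a ∪ f aᶜ)) with hH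
    have hH1 : ∀ a, #(H a) < κ := by
      intro a
      refine lt_of_le_of_lt (le_trans Cardinal.mk_insert_le
        (add_le_add (le_trans Cardinal.mk_insert_le
          (add_le_add (Cardinal.mk_union_le _ _) le_rfl)) le_rfl)) ?_
      have h1 : (1 : Cardinal.{u}) < κ := lt_of_lt_of_le Cardinal.one_lt_aleph0 hκ0
      exact Cardinal.add_lt_of_lt hκ0
        (Cardinal.add_lt_of_lt hκ0 (Cardinal.add_lt_of_lt hκ0 (hf1 a) (hf1 aᶜ)) h1) h1
    have hH2 : ∀ a, a ∈ H a := fun a => Set.mem_insert _ _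
    obtain ⟨a, haY, b, hbY, hab, e, hea, hfix⟩ :=
      FNAux.core κ hκ Y hlt H hH1 hH2
    have hdisj : Disjoint a b := hpair haY hbY hab
    obtain ⟨c, hcfa, hcfb, hac, hcb⟩ := hf2 a bᶜ hdisj.le_compl_right
    have hcHa : c ∈ H a := Set.mem_insert_of_mem _ (Set.mem_insert_of_mem _ (Set.mem_union_left _ hcfa))
    have hcHb : c ∈ H b := Set.mem_insert_of_mem _ (Set.mem_insert_of_mem _ (Set.mem_union_right _ hcfb))
    have hmono : (e ⟨a, hH2 a⟩ : ↥(H b)) ≤ e ⟨c, hcHa⟩ := e.le_iff_le.2 hac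
    have hbc : b ≤ c := by
      have := Subtype.coe_le_coe.2 hmono
      rwa [hea, hfix c hcHa hcHb] at this
    have hbbot : b = ⊥ := by
      have h5 : b ≤ bᶜ := le_trans hbc hcb
      have h6 : b ≤ b ⊓ bᶜ := le_inf le_rfl h5
      rw [inf_compl_eq_bot] at h6
      exact le_bot_iff.1 h6
    exact hbot (hbbot ▸ hbY)
  · refine ciSup_le' ?_
    rintro ⟨Y, hchain⟩
    by_contra hlt
    push_neg at hlt
    set H : B → Set B := fun a => insert a (f a) with hH
    have hH1 : ∀ a, #(H a) < κ := by
      intro a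
      refine lt_of_le_of_lt Cardinal.mk_insert_le ?_
      exact Cardinal.add_lt_of_lt hκ0 (hf1 a) (lt_of_lt_of_le Cardinal.one_lt_aleph0 hκ0)
    have hH2 : ∀ a, a ∈ H a := fun a => Set.mem_insert _ _
    obtain ⟨a, haY, b, hbY, hab, e, hea, hfix⟩ :=
      FNAux.core κ hκ Y hlt H hH1 hH2
    rcases hchain haY hbY hab with hle | hle
    · obtain ⟨c, hcfa, hcfb, hac, hcb⟩ := hf2 a b hle
      have hcHa : c ∈ H a := Set.mem_insert_of_mem _ hcfa
      have hcHb : c ∈ H b := Set.mem_insert_of_mem _ hcfb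
      have hbc : b ≤ c := by
        have := Subtype.coe_le_coe.2 (e.le_iff_le.2
          (show (⟨a, hH2 a⟩ : ↥(H a)) ≤ ⟨c, hcHa⟩ from hac))
        rwa [hea, hfix c hcHa hcHb] at this
      have hcbeq : c = b := le_antisymm hcb hbc
      have h7 : e ⟨a, hH2 a⟩ = e ⟨c, hcHa⟩ := by
        apply Subtype.ext
        rw [hea, hfix c hcHa hcHb, hcbeq]
      have h8 : a = c := congrArg Subtype.val (e.injective h7)
      exact hab (h8.trans hcbeq)
    · obtain ⟨c, hcfb, hcfa, hbc, hca⟩ := hf2 b a hle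
      have hcHa : c ∈ H a := Set.mem_insert_of_mem _ hcfa
      have hcHb : c ∈ H b := Set.mem_insert_of_mem _ hcfb
      have heacb : e ⟨a, hH2 a⟩ = ⟨b, hH2 b⟩ := Subtype.ext hea
      have hecc : e ⟨c, hcHa⟩ = ⟨c, hcHb⟩ := Subtype.ext (hfix c hcHa hcHb)
      -- from b ≤ c : e.symm mono gives a ≤ c
      have hac : a ≤ c := by
        have h5 : (⟨b, hH2 b⟩ : ↥(H b)) ≤ ⟨c, hcHb⟩ := hbc
        rw [← heacb, ← hecc] at h5
        exact e.le_iff_le.1 h5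
      have hcaeq : c = a := le_antisymm hca hac
      -- then e ⟨a⟩ = ⟨b⟩ and e ⟨c⟩ = ⟨c⟩ with c = a gives b = c
      have h6 : (⟨b, hH2 b⟩ : ↥(H b)) = ⟨c, hcHb⟩ := by
        rw [← heacb, ← hecc]
        congr 1
        exact Subtype.ext hcaeq.symm
      have h7 : b = c := congrArg Subtype.val h6
      exact hab (hcaeq ▸ h7.symm ▸ rfl)
end

section
/- Let κ be a regular uncountable cardinal. Then there exists a strictly ⊆_{<κ}-increasing sequence of subsets of κ of order type κ⁺, i.e., a sequence (u_ξ)_{ξ<κ⁺} of subsets of κ such that for ξ < η, |u_ξ \ u_η| < κ and |u_η \ u_ξ| = κ. -/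
universe u v

open Cardinal

namespace St17

noncomputable def FF (κ : Cardinal.{u}) : Ordinal.{u} → Ordinal.{u} → Ordinal.{u} :=
  Ordinal.lt_wf.fix fun ξ ih =>
    Classical.epsilon fun g : Ordinal.{u} → Ordinal.{u} =>
      (∀ α < κ.ord, g α < κ.ord) ∧
      ∀ η, ∀ h : η < ξ,
        #{α : Ordinal.{u} | α < κ.ord ∧ g α ≤ ih η h α} < Cardinal.lift.{u+1} κ

def PP (κ : Cardinal.{u}) (ξ : Ordinal.{u}) (g : Ordinal.{u} → Ordinal.{u}) : Prop :=
  (∀ α < κ.ord, g α < κ.ord) ∧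
  ∀ η, ∀ _h : η < ξ,
    #{α : Ordinal.{u} | α < κ.ord ∧ g α ≤ FF κ η α} < Cardinal.lift.{u+1} κ

lemma FF_eq (κ : Cardinal.{u}) (ξ : Ordinal.{u}) :
    FF κ ξ = Classical.epsilon (PP κ ξ) := by
  rw [FF, WellFounded.fix_eq]
  rfl

lemma isRegular_lift {κ : Cardinal.{u}} (h : κ.IsRegular) :
    (Cardinal.lift.{v} κ).IsRegular := by
  constructor
  · exact Cardinal.aleph0_le_lift.mpr h.1
  · rw [← Cardinal.lift_ord, ← Ordinal.lift_cof]
    exact Cardinal.lift_le.mpr h.2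

lemma main (κ : Cardinal.{u}) (hreg : κ.IsRegular) :
    ∀ ξ : Ordinal.{u}, ξ < (Order.succ κ).ord → PP κ ξ (FF κ ξ) := by
  have hK0 : (0 : Ordinal) < κ.ord :=
    Cardinal.lt_ord.mpr (by simpa using (aleph0_pos.trans_le hreg.1))
  have Klim : Order.IsSuccLimit κ.ord := Cardinal.isSuccLimit_ord hreg.1
  intro ξ
  refine Ordinal.lt_wf.induction (C := fun ξ => ξ < (Order.succ κ).ord → PP κ ξ (FF κ ξ)) ξ ?_
  intro ξ IH hξ
  classical
  have hex : ∃ g, PP κ ξ g := by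
    rcases eq_or_ne ξ 0 with rfl | hξ0
    · refine ⟨fun _ => 0, fun α _ => hK0, fun η h => absurd h (by simp)⟩
    · have hξpos : 0 < ξ := pos_iff_ne_zero.mpr hξ0
      -- a "surjection" from Iio κ.ord onto Iio ξ
      have hle : #(Set.Iio ξ) ≤ #(Set.Iio κ.ord) := by
        rw [Ordinal.mk_Iio_ordinal, Ordinal.mk_Iio_ordinal]
        refine Cardinal.lift_le.mpr ?_
        rw [Cardinal.card_ord]
        exact Order.lt_succ_iff.mp (Cardinal.lt_ord.mp hξ)
      obtain ⟨e⟩ := hle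
      set σ : Ordinal.{u} → Ordinal.{u} := fun i =>
        if h : ∃ η : Set.Iio ξ, ((e η : Set.Iio κ.ord) : Ordinal) = i
        then ((h.choose : Set.Iio ξ) : Ordinal) else 0 with hσ
      have hσlt : ∀ i, σ i < ξ := by
        intro i
        rw [hσ]
        dsimp only
        split
        · next h => exact h.choose.2
        · exact hξpos
      have hσsurj : ∀ η < ξ, ∃ i < κ.ord, σ i = η := by
        intro η hη
        refine ⟨(e ⟨η, hη⟩ : Set.Iio κ.ord), (e ⟨η, hη⟩).2, ?_⟩
        rw [hσ]
        dsimp only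
        have hex' : ∃ η' : Set.Iio ξ, ((e η' : Set.Iio κ.ord) : Ordinal)
            = ((e ⟨η, hη⟩ : Set.Iio κ.ord) : Ordinal) := ⟨⟨η, hη⟩, rfl⟩
        rw [dif_pos hex']
        have : hex'.choose = ⟨η, hη⟩ :=
          e.injective (Subtype.coe_injective hex'.choose_spec)
        rw [this]
      set g : Ordinal.{u} → Ordinal.{u} :=
        fun α => Ordinal.bsup.{u,u} (α + 1) (fun i _ => FF κ (σ i) α + 1) with hg
      refine ⟨g, ?_, ?_⟩
      · intro α hα
        have hα1 : α + 1 < κ.ord := by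
          rw [Ordinal.add_one_eq_succ]; exact Klim.succ_lt hα
        rw [hg]
        refine Cardinal.bsup_lt_ord_of_isRegular hreg (Cardinal.lt_ord.mp hα1) ?_
        intro i hi
        have h1 : FF κ (σ i) α < κ.ord :=
          (IH (σ i) (hσlt i) ((hσlt i).trans hξ)).1 α hα
        rw [Ordinal.add_one_eq_succ]; exact Klim.succ_lt h1
      · intro η hη
        obtain ⟨i₀, hi₀K, hi₀⟩ := hσsurj η hη
        have hsub : {α : Ordinal.{u} | α < κ.ord ∧ g α ≤ FF κ η α}
            ⊆ Set.Iio i₀ := by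
          intro α hα
          by_contra hcon
          have hle' : i₀ ≤ α := not_lt.mp (by simpa using hcon)
          have hmem : i₀ < α + 1 := by
            rw [Ordinal.add_one_eq_succ]; exact Order.lt_succ_iff.mpr hle'
          have h1 : FF κ (σ i₀) α + 1 ≤ Ordinal.bsup.{u,u} (α + 1)
              (fun i _ => FF κ (σ i) α + 1) := Ordinal.le_bsup _ i₀ hmem
          rw [hi₀] at h1
          have h2 : FF κ η α + 1 ≤ g α := h1
          have := h2.trans hα.2
          rw [Ordinal.add_one_eq_succ, Order.succ_le_iff] at this; exact lt_irrefl _ this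
        calc #{α : Ordinal.{u} | α < κ.ord ∧ g α ≤ FF κ η α}
            ≤ #(Set.Iio i₀) := Cardinal.mk_le_mk_of_subset hsub
          _ = Cardinal.lift.{u+1} i₀.card := Ordinal.mk_Iio_ordinal i₀
          _ < Cardinal.lift.{u+1} κ := Cardinal.lift_lt.mpr (Cardinal.lt_ord.mp hi₀K)
  rw [FF_eq]
  exact Classical.epsilon_spec hex



theorem statement17' (κ : Cardinal.{u}) (hreg : κ.IsRegular) (hunc : ℵ₀ < κ) :
    ∃ u : Ordinal.{u} → Set Ordinal.{u},
      (∀ ξ < (Order.succ κ).ord, u ξ ⊆ Set.Iio κ.ord) ∧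
      ∀ ξ η : Ordinal.{u}, ξ < η → η < (Order.succ κ).ord →
        #↥(u ξ \ u η) < Cardinal.lift.{u + 1} κ ∧
        #↥(u η \ u ξ) = Cardinal.lift.{u + 1} κ := by
  classical
  have haleph : ℵ₀ ≤ Cardinal.lift.{u+1} κ := Cardinal.aleph0_le_lift.mpr hreg.1
  have hA : #(Set.Iio κ.ord) = Cardinal.lift.{u+1} κ := by
    rw [Ordinal.mk_Iio_ordinal, Cardinal.card_ord]
  have hprod : #(↥(Set.Iio κ.ord) × ↥(Set.Iio κ.ord)) = #(Set.Iio κ.ord) := by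
    rw [Cardinal.mk_prod]
    simp only [Cardinal.lift_id', Cardinal.lift_id]
    rw [hA]
    exact Cardinal.mul_eq_self haleph
  obtain ⟨E⟩ := Cardinal.eq.mp hprod
  set J : ↥(Set.Iio κ.ord) × ↥(Set.Iio κ.ord) → Ordinal.{u} :=
    fun p => ((E p : Set.Iio κ.ord) : Ordinal) with hJ
  have hJinj : Function.Injective J := fun p q h =>
    E.injective (Subtype.coe_injective h)
  set u : Ordinal.{u} → Set Ordinal.{u} := fun ξ =>
    J '' {p | ((p.2 : Ordinal)) < FF κ ξ ((p.1 : Ordinal))} with hu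
  refine ⟨u, ?_, ?_⟩
  · rintro ξ - z ⟨p, -, rfl⟩
    exact (E p).2
  · intro ξ η hξη hη
    have hξ : ξ < (Order.succ κ).ord := hξη.trans hη
    have Pξ := main κ hreg ξ hξ
    have Pη := main κ hreg η hη
    -- difference sets in the square
    have hdiff : ∀ ζ ζ' : Ordinal.{u}, u ζ \ u ζ' =
        J '' {p | ((p.2 : Ordinal)) < FF κ ζ ((p.1 : Ordinal)) ∧
          FF κ ζ' ((p.1 : Ordinal)) ≤ ((p.2 : Ordinal))} := by
      intro ζ ζ'
      rw [hu]
      dsimp only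
      rw [← Set.image_diff hJinj]
      congr 1
      ext p
      simp [not_lt, and_comm]
    constructor
    · -- small difference
      rw [hdiff ξ η, Cardinal.mk_image_eq hJinj]
      set Bad : Set Ordinal.{u} := {α | α < κ.ord ∧ FF κ η α ≤ FF κ ξ α} with hBad
      have hBadSmall : #Bad < Cardinal.lift.{u+1} κ := Pη.2 ξ hξη
      set D : Set (↥(Set.Iio κ.ord) × ↥(Set.Iio κ.ord)) :=
        {p | ((p.2 : Ordinal)) < FF κ ξ ((p.1 : Ordinal)) ∧
          FF κ η ((p.1 : Ordinal)) ≤ ((p.2 : Ordinal))} with hD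
      have hcover : D ⊆ ⋃ (α : ↥Bad),
          {p : ↥(Set.Iio κ.ord) × ↥(Set.Iio κ.ord) |
            ((p.1 : Ordinal)) = (α : Ordinal) ∧
            ((p.2 : Ordinal)) < FF κ ξ ((α : Ordinal))} := by
        intro p hp
        have hmem : ((p.1 : Ordinal)) ∈ Bad := ⟨p.1.2, hp.2.trans hp.1.le⟩
        exact Set.mem_iUnion.mpr ⟨⟨_, hmem⟩, rfl, hp.1⟩
      have hcol : ∀ α : ↥Bad,
          #{p : ↥(Set.Iio κ.ord) × ↥(Set.Iio κ.ord) |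
            ((p.1 : Ordinal)) = (α : Ordinal) ∧
            ((p.2 : Ordinal)) < FF κ ξ ((α : Ordinal))} < Cardinal.lift.{u+1} κ := by
        intro α
        have hFlt : FF κ ξ (α : Ordinal) < κ.ord := Pξ.1 _ α.2.1
        have hinj : Function.Injective
            (fun p : {p : ↥(Set.Iio κ.ord) × ↥(Set.Iio κ.ord) |
              ((p.1 : Ordinal)) = (α : Ordinal) ∧
              ((p.2 : Ordinal)) < FF κ ξ ((α : Ordinal))} =>
              (⟨(p.1.2 : Ordinal), p.2.2⟩ : Set.Iio (FF κ ξ (α : Ordinal)))) := by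
          intro p q h
          have hb := Subtype.ext_iff.mp h
          apply Subtype.ext
          apply Prod.ext
          · exact Subtype.ext (p.2.1.trans q.2.1.symm)
          · exact Subtype.ext hb
        calc #{p : ↥(Set.Iio κ.ord) × ↥(Set.Iio κ.ord) |
              ((p.1 : Ordinal)) = (α : Ordinal) ∧
              ((p.2 : Ordinal)) < FF κ ξ ((α : Ordinal))}
            ≤ #(Set.Iio (FF κ ξ (α : Ordinal))) := Cardinal.mk_le_of_injective hinj
          _ = Cardinal.lift.{u+1} (FF κ ξ (α : Ordinal)).card := Ordinal.mk_Iio_ordinal _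
          _ < Cardinal.lift.{u+1} κ := Cardinal.lift_lt.mpr (Cardinal.lt_ord.mp hFlt)
      calc #D ≤ #(⋃ (α : ↥Bad),
            {p : ↥(Set.Iio κ.ord) × ↥(Set.Iio κ.ord) |
              ((p.1 : Ordinal)) = (α : Ordinal) ∧
              ((p.2 : Ordinal)) < FF κ ξ ((α : Ordinal))}) :=
            Cardinal.mk_le_mk_of_subset hcover
        _ ≤ Cardinal.sum.{u+1,u+1} (fun α : ↥Bad =>
            #{p : ↥(Set.Iio κ.ord) × ↥(Set.Iio κ.ord) |
              ((p.1 : Ordinal)) = (α : Ordinal) ∧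
              ((p.2 : Ordinal)) < FF κ ξ ((α : Ordinal))}) :=
            Cardinal.mk_iUnion_le_sum_mk
        _ < Cardinal.lift.{u+1} κ := by
            refine Cardinal.sum_lt_lift_of_isRegular.{u+1,u+1} (isRegular_lift hreg) ?_ hcol
            simpa using hBadSmall
    · -- big difference
      rw [hdiff η ξ, Cardinal.mk_image_eq hJinj]
      set Bad : Set Ordinal.{u} := {α | α < κ.ord ∧ FF κ η α ≤ FF κ ξ α} with hBad
      have hBadSmall : #Bad < Cardinal.lift.{u+1} κ := Pη.2 ξ hξη
      set T : Set Ordinal.{u} := {α | α < κ.ord ∧ FF κ ξ α < FF κ η α} with hT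
      have hTbig : Cardinal.lift.{u+1} κ ≤ #T := by
        by_contra hcon
        push_neg at hcon
        have hcover : Set.Iio κ.ord ⊆ T ∪ Bad := by
          intro α hα
          rcases lt_or_ge (FF κ ξ α) (FF κ η α) with h | h
          · exact Or.inl ⟨hα, h⟩
          · exact Or.inr ⟨hα, h⟩
        have : Cardinal.lift.{u+1} κ ≤ #T + #Bad := by
          calc Cardinal.lift.{u+1} κ = #(Set.Iio κ.ord) := hA.symm
            _ ≤ #((T ∪ Bad : Set Ordinal.{u})) := Cardinal.mk_le_mk_of_subset hcover
            _ ≤ #T + #Bad := Cardinal.mk_union_le T Bad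
        exact absurd this (not_le.mpr (Cardinal.add_lt_of_lt haleph hcon hBadSmall))
      set D : Set (↥(Set.Iio κ.ord) × ↥(Set.Iio κ.ord)) :=
        {p | ((p.2 : Ordinal)) < FF κ η ((p.1 : Ordinal)) ∧
          FF κ ξ ((p.1 : Ordinal)) ≤ ((p.2 : Ordinal))} with hD
      refine le_antisymm ?_ ?_
      · calc #D ≤ #(↥(Set.Iio κ.ord) × ↥(Set.Iio κ.ord)) := Cardinal.mk_set_le D
          _ = Cardinal.lift.{u+1} κ := hprod.trans hA
      · have hinj : Function.Injective (fun α : ↥T =>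
            ((⟨(α : Ordinal), α.2.1⟩, ⟨FF κ ξ (α : Ordinal), Pξ.1 _ α.2.1⟩) :
              ↥(Set.Iio κ.ord) × ↥(Set.Iio κ.ord))) := by
          intro a b h
          have := congrArg (fun p => ((p.1 : Ordinal))) h
          exact Subtype.coe_injective this
        have hmapsTo : ∀ α : ↥T,
            ((⟨(α : Ordinal), α.2.1⟩, ⟨FF κ ξ (α : Ordinal), Pξ.1 _ α.2.1⟩) :
              ↥(Set.Iio κ.ord) × ↥(Set.Iio κ.ord)) ∈ D := fun α => ⟨α.2.2, le_refl _⟩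
        have : #T ≤ #D := by
          refine Cardinal.mk_le_of_injective (f := fun α : ↥T =>
            (⟨_, hmapsTo α⟩ : ↥D)) ?_
          intro a b h
          exact hinj (congrArg Subtype.val h)
        exact hTbig.trans this


end St17

/-- For regular uncountable κ there is a strictly ⊆_{<κ}-increasing sequence of
subsets of κ of order type κ⁺. -/
theorem statement17 (κ : Cardinal.{u}) (hreg : κ.IsRegular) (hunc : ℵ₀ < κ) :
    ∃ u : Ordinal.{u} → Set Ordinal.{u},
      (∀ ξ < (Order.succ κ).ord, u ξ ⊆ Set.Iio κ.ord) ∧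
      ∀ ξ η : Ordinal.{u}, ξ < η → η < (Order.succ κ).ord →
        #↥(u ξ \ u η) < Cardinal.lift.{u + 1} κ ∧
        #↥(u η \ u ξ) = Cardinal.lift.{u + 1} κ := St17.statement17' κ hreg hunc
end

section
/- The power set algebra P(ω) has the weak Freese-Nation property if and only if P(ω)/fin has the weak Freese-Nation property. -/
universe u v

open Cardinal

/-!
Let `h` be the quotient map and fix a representative `rep q` of each `q`.  Then `h x ≤ h y` iff
`x \ y` is finite, so the countably many finite modifications of `rep q` all lie over `q`, and
whenever `h x ≤ q ≤ h y` with `x ⊆ y`, one of them lies between `x` and `y`.  A Freese–Nation map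
on either side is therefore transported to the other by pushing it forward along `h`, resp. by
replacing each interpolant `q` with the finite modifications of `rep q`.
-/

theorem mk_lt_aleph_one_iff_countable {α : Type u} {s : Set α} : #s < aleph 1 ↔ s.Countable :=
  lt_aleph_one_iff.trans le_aleph0_iff_set_countable

section Transfer

variable {P Q : Type u} [PartialOrder P] [PartialOrder Q]

theorem HasFN.of_countable_lift (φ : P → Q) (hφ : Monotone φ) (L : Q → Set P)
    (hL : ∀ q, (L q).Countable) (hLφ : ∀ q, ∀ a ∈ L q, φ a = q)
    (hlift : ∀ q r, q ≤ r → ∃ a ∈ L q, ∃ b ∈ L r, a ≤ b) :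
    HasFN (aleph 1) P → HasFN (aleph 1) Q := by
  rintro ⟨f, hf_card, hf⟩
  refine ⟨fun q => φ '' ⋃ a ∈ L q, f a, fun q => ?_, fun q r hqr => ?_⟩
  · exact mk_lt_aleph_one_iff_countable.mpr <|
      ((hL q).biUnion fun a _ => mk_lt_aleph_one_iff_countable.mp (hf_card a)).image φ
  · obtain ⟨a, ha, b, hb, hab⟩ := hlift q r hqr
    obtain ⟨c, hca, hcb, hac, hcb'⟩ := hf a b hab
    refine ⟨φ c, ⟨c, Set.mem_biUnion ha hca, rfl⟩, ⟨c, Set.mem_biUnion hb hcb, rfl⟩, ?_, ?_⟩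
    · exact hLφ q a ha ▸ hφ hac
    · exact hLφ r b hb ▸ hφ hcb'

theorem HasFN.of_countable_interpolants (φ : P → Q) (hφ : Monotone φ) (M : Q → Set P)
    (hM : ∀ q, (M q).Countable)
    (hinterp : ∀ x y q, x ≤ y → φ x ≤ q → q ≤ φ y → ∃ c ∈ M q, x ≤ c ∧ c ≤ y) :
    HasFN (aleph 1) Q → HasFN (aleph 1) P := by
  rintro ⟨g, hg_card, hg⟩
  refine ⟨fun x => ⋃ q ∈ g (φ x), M q, fun x => ?_, fun x y hxy => ?_⟩
  · exact mk_lt_aleph_one_iff_countable.mpr <|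
      (mk_lt_aleph_one_iff_countable.mp (hg_card (φ x))).biUnion fun q _ => hM q
  · obtain ⟨q, hqx, hqy, hxq, hqy'⟩ := hg (φ x) (φ y) (hφ hxy)
    obtain ⟨c, hc, hxc, hcy⟩ := hinterp x y q hxy hxq hqy'
    exact ⟨c, Set.mem_biUnion hqx hc, Set.mem_biUnion hqy hc, hxc, hcy⟩

end Transfer

section FiniteModifications

variable {α : Type*}

def finiteModifications (z : Set α) : Set (Set α) :=
  Set.range fun p : Finset α × Finset α => (z ∪ p.1) \ p.2

theorem self_mem_finiteModifications (z : Set α) : z ∈ finiteModifications z :=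
  ⟨(∅, ∅), by simp⟩

theorem countable_finiteModifications [Countable α] (z : Set α) :
    (finiteModifications z).Countable :=
  Set.countable_range _

theorem finite_diff_and_diff_of_mem_finiteModifications {z c : Set α}
    (hc : c ∈ finiteModifications z) : (c \ z).Finite ∧ (z \ c).Finite := by
  obtain ⟨⟨s, t⟩, rfl⟩ := hc
  refine ⟨s.finite_toSet.subset ?_, t.finite_toSet.subset ?_⟩
  · rintro n ⟨⟨hzs, -⟩, hz⟩
    exact hzs.resolve_left hz
  · rintro n ⟨hz, hc⟩
    by_contra ht
    exact hc ⟨Or.inl hz, ht⟩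

theorem exists_mem_finiteModifications_between {x y z : Set α} (hxy : x ⊆ y)
    (hxz : (x \ z).Finite) (hzy : (z \ y).Finite) :
    ∃ c ∈ finiteModifications z, x ⊆ c ∧ c ⊆ y := by
  refine ⟨(z ∪ hxz.toFinset) \ hzy.toFinset, ⟨(hxz.toFinset, hzy.toFinset), rfl⟩, ?_, ?_⟩
  · intro n hn
    simp only [Set.mem_sdiff, Set.mem_union, Set.Finite.coe_toFinset]
    tauto
  · intro n hn
    simp only [Set.mem_sdiff, Set.mem_union, Set.Finite.coe_toFinset] at hn
    by_contra hny
    tauto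

end FiniteModifications

theorem le_iff_diff_finite {α Q : Type*} [BooleanAlgebra Q] {h : Set α → Q}
    (hsup : ∀ x y : Set α, h (x ∪ y) = h x ⊔ h y) (hcompl : ∀ x : Set α, h xᶜ = (h x)ᶜ)
    (hker : ∀ x : Set α, h x = ⊥ ↔ x.Finite) (x y : Set α) :
    h x ≤ h y ↔ (x \ y).Finite := by
  have hinf : h (x ∩ yᶜ) = h x ⊓ (h y)ᶜ := by
    rw [← compl_compl (x ∩ yᶜ), Set.compl_inter]
    simp only [hcompl, hsup, compl_sup, compl_compl]
  rw [← disjoint_compl_right_iff, disjoint_iff, ← hinf, hker, Set.sdiff_eq]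

/-- P(ω) has the weak Freese-Nation property iff P(ω)/fin has it.  The quotient
P(ω)/fin is represented by any Boolean algebra Q together with a surjective Boolean
homomorphism from P(ω) whose kernel is exactly the ideal of finite sets. -/
theorem statement18 (Q : Type) [BooleanAlgebra Q] (h : Set ℕ → Q)
    (hsup : ∀ x y : Set ℕ, h (x ∪ y) = h x ⊔ h y)
    (hcompl : ∀ x : Set ℕ, h xᶜ = (h x)ᶜ)
    (hsurj : Function.Surjective h)
    (hker : ∀ x : Set ℕ, h x = ⊥ ↔ x.Finite) :
    (HasFN (Cardinal.aleph 1) (Set ℕ) ↔ HasFN (Cardinal.aleph 1) Q) := by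
  have hle := le_iff_diff_finite hsup hcompl hker
  have hmono : Monotone h := fun x y hxy => (hle x y).mpr (by simp [Set.sdiff_eq_empty.mpr hxy])
  choose rep hrep using hsurj
  have hfiber : ∀ q, ∀ c ∈ finiteModifications (rep q), h c = q := fun q c hc => by
    obtain ⟨hcz, hzc⟩ := finite_diff_and_diff_of_mem_finiteModifications hc
    exact (hrep q).symm ▸ le_antisymm ((hle _ _).mpr hcz) ((hle _ _).mpr hzc)
  constructor
  · refine HasFN.of_countable_lift h hmono (fun q => finiteModifications (rep q))
      (fun q => countable_finiteModifications _) hfiber fun q r hqr => ?_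
    have hqr' : (rep q \ rep r).Finite := (hle _ _).mp (by rwa [hrep, hrep])
    obtain ⟨a, ha, -, har⟩ :=
      exists_mem_finiteModifications_between (Set.empty_subset _) (by simp) hqr'
    exact ⟨a, ha, rep r, self_mem_finiteModifications _, har⟩
  · refine HasFN.of_countable_interpolants h hmono (fun q => finiteModifications (rep q))
      (fun q => countable_finiteModifications _) fun x y q hxy hxq hqy => ?_
    exact exists_mem_finiteModifications_between hxy
      ((hle _ _).mp (by rwa [hrep])) ((hle _ _).mp (by rwa [hrep]))
end

section
/- If a Boolean algebra B satisfies the countable chain condition and (A_α)_{α<κ} is an increasing sequence of relatively complete subalgebras of B with cf(κ) > ω, then ∪_{α<κ} A_α is a relatively complete subalgebra of B. -/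
universe u v

open Cardinal

/-- `A` is a relatively complete subalgebra of the Boolean algebra `B`: it is a
subalgebra and every `b : B` has a lower projection on `A`. -/
def IsRelCompleteSubalg {B : Type u} [BooleanAlgebra B] (A : Set B) : Prop :=
  (⊥ : B) ∈ A ∧ (∀ x ∈ A, ∀ y ∈ A, x ⊔ y ∈ A) ∧ (∀ x ∈ A, xᶜ ∈ A) ∧
    ∀ b : B, ∃ p ∈ A, p ≤ b ∧ ∀ a ∈ A, a ≤ b → a ≤ p

/-- `B` satisfies the countable chain condition. -/
def CCC (B : Type u) [BooleanAlgebra B] : Prop :=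
  ∀ Y : Set B, (⊥ : B) ∉ Y → Y.Pairwise Disjoint → Y.Countable

/-- If B is ccc and (A_α)_{α<κ} is an increasing sequence of relatively complete
subalgebras of B with cf(κ) > ω, then the union is a relatively complete subalgebra. -/
theorem statement19 {B : Type u} [BooleanAlgebra B] (hccc : CCC B)
    (κ : Ordinal.{v}) (hcf : ℵ₀ < κ.cof)
    (A : Ordinal.{v} → Set B)
    (hmono : ∀ α β : Ordinal.{v}, α ≤ β → β < κ → A α ⊆ A β)
    (h : ∀ α < κ, IsRelCompleteSubalg (A α)) :
    IsRelCompleteSubalg (⋃ α < κ, A α) := by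
  have hκlim : Order.IsSuccLimit κ := Ordinal.aleph0_le_cof.mp hcf.le
  have hκ0 : (0 : Ordinal) < κ := hκlim.pos
  have hmem : ∀ x : B, x ∈ (⋃ α < κ, A α) ↔ ∃ α, α < κ ∧ x ∈ A α := by
    intro x; simp [Set.mem_iUnion]
  refine ⟨?_, ?_, ?_, ?_⟩
  · exact (hmem _).mpr ⟨0, hκ0, (h 0 hκ0).1⟩
  · rintro x hx y hy
    obtain ⟨α, hα, hxα⟩ := (hmem _).mp hx
    obtain ⟨β, hβ, hyβ⟩ := (hmem _).mp hy
    have hγ : max α β < κ := max_lt hα hβ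
    exact (hmem _).mpr ⟨max α β, hγ,
      (h _ hγ).2.1 x (hmono α _ (le_max_left _ _) hγ hxα)
        y (hmono β _ (le_max_right _ _) hγ hyβ)⟩
  · rintro x hx
    obtain ⟨α, hα, hxα⟩ := (hmem _).mp hx
    exact (hmem _).mpr ⟨α, hα, (h α hα).2.2.1 x hxα⟩
  · intro b
    have hp : ∀ α, α < κ → ∃ p ∈ A α, p ≤ b ∧ ∀ a ∈ A α, a ≤ b → a ≤ p :=
      fun α hα => (h α hα).2.2.2 b
    choose! p hpA hpb hpmax using hp
    have pmono : ∀ α β, α ≤ β → β < κ → p α ≤ p β := fun α β hab hβ =>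
      hpmax β hβ (p α) (hmono α β hab hβ (hpA α (lt_of_le_of_lt hab hβ)))
        (hpb α (lt_of_le_of_lt hab hβ))
    -- the set of projections
    set V : Set B := p '' Set.Iio κ with hV
    have hVchain : ∀ v ∈ V, ∀ w ∈ V, v ≤ w ∨ w ≤ v := by
      rintro v ⟨α, hα, rfl⟩ w ⟨β, hβ, rfl⟩
      rcases le_total α β with hab | hab
      · exact Or.inl (pmono α β hab hβ)
      · exact Or.inr (pmono β α hab hα)
    -- elements of V having something above them in V
    set W : Set B := {v ∈ V | ∃ w ∈ V, v < w} with hW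
    -- the "successor" index
    set γ : B → Ordinal.{v} := fun v => sInf {α | α < κ ∧ v < p α} with hγdef
    have hγspec : ∀ v ∈ W, γ v < κ ∧ v < p (γ v) := by
      rintro v ⟨-, w, ⟨β, hβ, rfl⟩, hvw⟩
      exact csInf_mem (s := {α | α < κ ∧ v < p α}) ⟨β, hβ, hvw⟩
    have hγle : ∀ v ∈ W, ∀ w ∈ V, v < w → p (γ v) ≤ w := by
      rintro v hv w ⟨β, hβ, rfl⟩ hvw
      have : γ v ≤ β := csInf_le (OrderBot.bddBelow _) ⟨hβ, hvw⟩
      exact pmono _ _ this hβ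
    set δ : B → B := fun v => p (γ v) \ v with hδdef
    have hδne : ∀ v ∈ W, δ v ≠ ⊥ := by
      intro v hv hbot
      have := (hγspec v hv).2
      rw [hδdef] at hbot
      simp only [sdiff_eq_bot_iff] at hbot
      exact absurd hbot (not_le_of_gt this)
    have hδdisj : ∀ v ∈ W, ∀ v' ∈ W, v ≠ v' → Disjoint (δ v) (δ v') := by
      have key : ∀ v ∈ W, ∀ v' ∈ W, v < v' → Disjoint (δ v) (δ v') := by
        intro v hv v' hv' hlt
        have h1 : δ v ≤ v' := le_trans sdiff_le (hγle v hv v' hv'.1 hlt)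
        have h2 : Disjoint (δ v') v' := disjoint_sdiff_self_left
        exact (h2.mono_right h1).symm
      intro v hv v' hv' hne
      rcases hVchain v hv.1 v' hv'.1 with hle | hle
      · exact key v hv v' hv' (lt_of_le_of_ne hle hne)
      · exact (key v' hv' v hv (lt_of_le_of_ne hle hne.symm)).symm
    -- W is countable via ccc
    have hYc : (δ '' W).Countable := by
      apply hccc
      · rintro ⟨v, hv, hbot⟩
        exact hδne v hv hbot
      · rintro y ⟨v, hv, rfl⟩ y' ⟨v', hv', rfl⟩ hne
        have hvv : v ≠ v' := by rintro rfl; exact hne rfl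
        exact hδdisj v hv v' hv' hvv
    have hδinj : Set.InjOn δ W := by
      intro v hv v' hv' heq
      by_contra hne
      have := hδdisj v hv v' hv' hne
      rw [heq] at this
      exact hδne v' hv' (disjoint_self.mp this)
    have hWc : W.Countable := (Set.mapsTo_image δ W).countable_of_injOn hδinj hYc
    -- V \ W is a subsingleton
    have hVWc : (V \ W).Countable := by
      apply Set.Subsingleton.countable
      intro v hv v' hv'
      by_contra hne
      rcases hVchain v hv.1 v' hv'.1 with hle | hle
      · exact hv.2 ⟨hv.1, v', hv'.1, lt_of_le_of_ne hle hne⟩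
      · exact hv'.2 ⟨hv'.1, v, hv.1, lt_of_le_of_ne hle (Ne.symm hne)⟩
    have hVc : V.Countable := by
      have : V ⊆ W ∪ (V \ W) := by
        intro v hv
        by_cases hw : v ∈ W
        · exact Or.inl hw
        · exact Or.inr ⟨hv, hw⟩
      exact (hWc.union hVWc).mono this
    -- enumerate V and bound representatives
    have hVne : V.Nonempty := ⟨p 0, 0, hκ0, rfl⟩
    obtain ⟨f, hf⟩ := hVc.exists_eq_range hVne
    have hfel : ∀ n : ℕ, ∃ α, α < κ ∧ p α = f n := by
      intro n
      have : f n ∈ V := hf ▸ Set.mem_range_self n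
      obtain ⟨α, hα, hpα⟩ := this
      exact ⟨α, hα, hpα⟩
    choose g hg1 hg2 using hfel
    have hsup : iSup g < κ := by
      apply Ordinal.iSup_lt_ord_lift _ hg1
      rwa [Cardinal.mk_nat, Cardinal.lift_aleph0]
    set s := iSup g with hs
    -- the projections stabilize at s
    have hstab : ∀ β, s ≤ β → β < κ → p β = p s := by
      intro β hsβ hβ
      have : p β ∈ V := ⟨β, hβ, rfl⟩
      rw [hf] at this
      obtain ⟨n, hn⟩ := this
      have hgn : g n ≤ s := Ordinal.le_iSup g n
      have h1 : p (g n) ≤ p s := pmono _ _ hgn hsup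
      have h2 : p s ≤ p β := pmono _ _ hsβ hβ
      have h3 : p β = p (g n) := by rw [hg2 n, hn]
      exact le_antisymm (h3.le.trans h1) h2
    refine ⟨p s, (hmem _).mpr ⟨s, hsup, hpA s hsup⟩, hpb s hsup, ?_⟩
    intro a ha hab
    obtain ⟨β, hβ, haβ⟩ := (hmem _).mp ha
    have hγm : max β s < κ := max_lt hβ hsup
    have : a ≤ p (max β s) := hpmax _ hγm a (hmono β _ (le_max_left _ _) hγm haβ) hab
    rwa [hstab _ (le_max_right _ _) hγm] at this
end
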